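/- arXiv:2212.12171 — 2 statements merged into one kernel-verified Lean document; each statement's English description precedes it below -/
import Mathlib

section
/- For a unit interval order U on {1,...,n} with part listing w = q(U) produced by the insertion algorithm, the poset P(w) is isomorphic to U, via the bijection f that numbers the positions of w by increasing letter value and, within equal letter values, from left to right. -/
/-- A unit interval order on `Fin n`: `x ≺ y` implies `x < y`, and
`x ≺ y` implies `x' ≺ y'` for all `x' ≤ x` and `y' ≥ y`. -/
def IsUIO {n : ℕ} (r : Fin n → Fin n → Prop) : Prop :=
  (∀ x y, r x y → x < y) ∧
  (∀ x y, r x y → ∀ x' y', x' ≤ x → y ≤ y' → r x' y')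

/-- The poset `P(w)` of a part listing `w`: `i ≺ j` iff `w j − w i ≥ 2`,
or `w j − w i = 1` and `i < j`. -/
def Prel {n : ℕ} (w : Fin n → ℕ) (i j : Fin n) : Prop :=
  w i + 2 ≤ w j ∨ (w j = w i + 1 ∧ i < j)

/-- The level function: `ℓ j = 0` if `j` is minimal, else `1 + max {ℓ i : i ≺ j}`
(for a unit interval order, `i ≺ j` implies `i < j`). -/
def level {n : ℕ} (r : Fin n → Fin n → Prop) [DecidableRel r] : Fin n → ℕ
  | j =>
    ((Finset.univ.filter (fun i => r i j ∧ i < j)).attach).sup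
      (fun i => level r i.1 + 1)
termination_by j => j.val
decreasing_by
  exact (Finset.mem_filter.mp i.2).2.2

/-- `C i`: the number of elements of level `ℓ(i) − 1` comparable to `i`. -/
def comparCount {n : ℕ} (r : Fin n → Fin n → Prop) [DecidableRel r] (i : Fin n) : ℕ :=
  (Finset.univ.filter (fun j => level r j + 1 = level r i ∧ (r j i ∨ r i j))).card

/-- Position directly after the `k`-th occurrence of `v` in a list (`0` if `k = 0`). -/
def afterKth : List ℕ → ℕ → ℕ → ℕ
  | _, _, 0 => 0
  | [], _, _ + 1 => 0
  | x :: xs, v, k + 1 =>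
    if x = v then
      if k = 0 then 1 else 1 + afterKth xs v k
    else 1 + afterKth xs v (k + 1)

/-- Starting from position `p`, skip the occurrences of the letter `l`. -/
def skipRun (q : List ℕ) (l p : ℕ) : ℕ :=
  p + ((q.drop p).takeWhile (fun x => x = l)).length

/-- The insertion algorithm: insert `ℓ(i)` directly after the occurrences of `ℓ(i)`
immediately following the `C_i`-th letter `ℓ(i) − 1`. -/
def buildQ {n : ℕ} (r : Fin n → Fin n → Prop) [DecidableRel r] : ℕ → List ℕ
  | 0 => []
  | i + 1 =>
    let q := buildQ r i
    if h : i < n then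
      let l := level r ⟨i, h⟩
      q.insertIdx (skipRun q l (afterKth q (l - 1) (comparCount r ⟨i, h⟩))) l
    else q

/-- The part listing `q(U)` produced by the insertion algorithm. -/
def qList {n : ℕ} (r : Fin n → Fin n → Prop) [DecidableRel r] : List ℕ :=
  buildQ r n

/-!
By induction on `m`, the word built from the elements `0, …, m - 1` has three properties: it
contains one letter `v` for each of these elements of level `v`; its letters rise by at most one
from each position to the next; and the position carrying the `k`-th letter `v + 1` stands for
the `k`-th element `y` of level `v + 1` and has `C_y` letters `v` to its left. Levels are monotone,
so each level is an interval of `Fin n`, and `m` comes last on its level so far: the insertion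
rule puts `ℓ(m)` after every letter `ℓ(m)` and behind exactly `C_m` letters `ℓ(m) - 1`, which
preserves the three properties.

The numbering `f` then sends the `k`-th letter `v` of `q(U)` to the `k`-th element of level `v`.
Elements two levels apart are always comparable, and the predecessors of `y` on the level just
below form an initial segment of that level of length `C_y`. So for adjacent levels `f p ≺ f q`
exactly when fewer letters `v` precede `p` than `q`, that is, when `p < q`.
-/

open Finset

theorem Finset.card_filter_or_of_disjoint {α : Type*} [Fintype α] [DecidableEq α]
    {P Q R : α → Prop} [DecidablePred P] [DecidablePred Q] [DecidablePred R]
    (hP : ∀ x, P x ↔ Q x ∨ R x) (hQR : ∀ x, Q x → ¬ R x) :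
    #{x | P x} = #{x | Q x} + #{x | R x} := by
  rw [filter_congr fun x _ => hP x, filter_or,
    card_union_of_disjoint (disjoint_filter.2 fun x _ => hQR x)]

theorem Finset.card_filter_lt_eq_of_card_filter_eq {α β : Type*} [Fintype α] [DecidableEq α]
    [Fintype β] [DecidableEq β] {g : α → ℕ} {g' : β → ℕ}
    (h : ∀ v, #{x | g x = v} = #{y | g' y = v}) (c : ℕ) : #{x | g x < c} = #{y | g' y < c} := by
  induction c with
  | zero => simp
  | succ c ih =>
    rw [card_filter_or_of_disjoint (Q := (g · < c)) (R := (g · = c)) (fun x => by omega)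
        (fun x => by omega),
      card_filter_or_of_disjoint (Q := (g' · < c)) (R := (g' · = c)) (fun x => by omega)
        (fun x => by omega), ih, h]

theorem Finset.mem_iff_card_filter_lt_lt_card {α : Type*} [LinearOrder α] {S T : Finset α}
    (hST : S ⊆ T) (hS : ∀ a ∈ T, ∀ b ∈ S, a ≤ b → a ∈ S) {x : α} (hx : x ∈ T) :
    x ∈ S ↔ #(T.filter (· < x)) < #S := by
  constructor
  · intro hxS
    calc #(T.filter (· < x)) < #(T.filter (· ≤ x)) :=
          card_lt_card <| (ssubset_iff_of_subset fun a ha => by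
            simp only [mem_filter] at ha ⊢; exact ⟨ha.1, ha.2.le⟩).2
            ⟨x, mem_filter.2 ⟨hx, le_rfl⟩, by simp⟩
      _ ≤ #S := card_le_card fun a ha => by
          rw [mem_filter] at ha
          exact hS a ha.1 x hxS ha.2
  · intro hlt
    by_contra hxS
    refine hlt.not_ge (card_le_card fun b hb => mem_filter.2 ⟨hST hb, ?_⟩)
    by_contra hxb
    exact hxS (hS x hx b hb (not_lt.1 hxb))

theorem Fin.val_eq_card_filter_lt {n : ℕ} (e : Fin n ≃ Fin n) (u : Fin n) :
    (e u).val = #{v | e v < e u} := by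
  rw [card_equiv e (t := {x | x < e u}) fun v => by simp, filter_gt_eq_Iio, Fin.card_Iio]

theorem Fin.card_filter_val_lt_succ {n : ℕ} (x : Fin n) (P : Fin n → Prop) [DecidablePred P] :
    #{y : Fin n | y.val < x.val + 1 ∧ P y} =
      #{y : Fin n | y.val < x.val ∧ P y} + if P x then 1 else 0 := by
  have hIic : ({y : Fin n | y.val < x.val + 1 ∧ P y} : Finset _) = (Iic x).filter P := by
    ext y; simp only [mem_filter, mem_univ, true_and, mem_Iic, Fin.le_def, Nat.lt_succ_iff]
  have hIio : ({y : Fin n | y.val < x.val ∧ P y} : Finset _) = (Iio x).filter P := by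
    ext y; simp only [mem_filter, mem_univ, true_and, mem_Iio, Fin.lt_def]
  rw [hIic, hIio, ← Iio_insert, filter_insert]
  split_ifs <;> simp

theorem Nat.exists_eq_of_le_add_one {g : ℕ → ℕ} (hg : ∀ t, g (t + 1) ≤ g t + 1)
    {s t c : ℕ} (hst : s ≤ t) (hs : g s ≤ c) (ht : c ≤ g t) :
    ∃ u, s ≤ u ∧ u ≤ t ∧ g u = c := by
  induction t, hst using Nat.le_induction with
  | base => exact ⟨s, le_rfl, le_rfl, by omega⟩
  | succ t hst ih =>
    by_cases hc : c ≤ g t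
    · obtain ⟨u, hsu, hut, hu⟩ := ih hc
      exact ⟨u, hsu, hut.trans t.le_succ, hu⟩
    · exact ⟨t + 1, hst.trans t.le_succ, le_rfl, by have := hg t; omega⟩

namespace List

theorem count_take_le_count_take {α : Type*} [DecidableEq α] (L : List α) (c : α) {t t' : ℕ}
    (h : t ≤ t') : (L.take t).count c ≤ (L.take t').count c :=
  (take_sublist_take_left h).count_le c

theorem count_take_succ {α : Type*} [DecidableEq α] (L : List α) (c d : α) {t : ℕ}
    (ht : t < L.length) :
    (L.take (t + 1)).count c = (L.take t).count c + if L.getD t d = c then 1 else 0 := by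
  rw [take_add_one, getElem?_eq_getElem ht, getD_eq_getElem L d ht, Option.toList_some,
    count_append, count_singleton]
  simp only [beq_iff_eq]

theorem count_take_lt_count_take_iff {α : Type*} [DecidableEq α] (L : List α) (d : α)
    {t t' : ℕ} (ht : t < L.length) :
    (L.take t).count (L.getD t d) < (L.take t').count (L.getD t d) ↔ t < t' := by
  constructor
  · intro hlt
    by_contra hle
    exact hlt.not_ge (L.count_take_le_count_take _ (not_lt.1 hle))
  · intro hlt
    have := L.count_take_le_count_take (L.getD t d) (Nat.succ_le_of_lt hlt)
    rw [count_take_succ L _ d ht, if_pos rfl] at this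
    omega

theorem count_take_eq_card_filter {α : Type*} [DecidableEq α] {n : ℕ} (L : List α)
    (hL : L.length = n) (c d : α) {t : ℕ} (ht : t ≤ n) :
    (L.take t).count c = #{i : Fin n | i.val < t ∧ L.getD i d = c} := by
  induction t with
  | zero => simp
  | succ t ih =>
    rw [count_take_succ L c d (by omega), ih (by omega),
      Fin.card_filter_val_lt_succ ⟨t, by omega⟩ (fun i : Fin n => L.getD i d = c)]

theorem count_take_eq_count_of_getD_ne {α : Type*} [DecidableEq α] {L : List α} {c d : α}
    {p : ℕ} (h : ∀ t, p ≤ t → t < L.length → L.getD t d ≠ c) :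
    (L.take p).count c = L.count c := by
  have hdrop : (L.drop p).count c = 0 := by
    rw [count_eq_zero, mem_drop_iff_getElem]
    rintro ⟨i, hi, hci⟩
    exact h (i + p) (by omega) hi (by rw [getD_eq_getElem _ _ hi]; simpa only [add_comm] using hci)
  rw [← L.take_append_drop p, count_append, hdrop, take_append_drop, add_zero]

theorem lt_length_of_getD_ne {α : Type*} {L : List α} {t : ℕ} {d : α} (h : L.getD t d ≠ d) :
    t < L.length :=
  lt_of_not_ge fun ht => h (getD_eq_default L d ht)

theorem count_insertIdx {α : Type*} [DecidableEq α] (L : List α) {p : ℕ} (x c : α)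
    (hp : p ≤ L.length) : (L.insertIdx p x).count c = L.count c + if x = c then 1 else 0 := by
  rw [(perm_insertIdx x L hp).count_eq, count_cons]
  simp only [beq_iff_eq]

theorem getD_insertIdx {α : Type*} (L : List α) {p : ℕ} (x d : α) (hp : p ≤ L.length)
    (s : ℕ) :
    (L.insertIdx p x).getD s d =
      if s < p then L.getD s d else if s = p then x else L.getD (s - 1) d := by
  simp only [getD_eq_getElem?_getD, getElem?_insertIdx]
  split_ifs <;> simp_all

theorem take_insertIdx_of_lt {α : Type*} (L : List α) {p t : ℕ} (x : α) (hpt : p < t) :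
    (L.insertIdx p x).take t = (L.take (t - 1)).insertIdx p x :=
  ext_getElem (by grind) (by grind)

theorem getD_succ_le_insertIdx {L : List ℕ} {p x : ℕ} (hp : p ≤ L.length)
    (hL : ∀ t, L.getD (t + 1) 0 ≤ L.getD t 0 + 1) (hle : ∀ t, L.getD t 0 ≤ x)
    (hx : 0 < p → x ≤ L.getD (p - 1) 0 + 1) (t : ℕ) :
    (L.insertIdx p x).getD (t + 1) 0 ≤ (L.insertIdx p x).getD t 0 + 1 := by
  rw [getD_insertIdx L x 0 hp, getD_insertIdx L x 0 hp]
  rcases lt_trichotomy (t + 1) p with ht | ht | ht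
  · rw [if_pos ht, if_pos (by omega)]
    exact hL t
  · rw [if_neg (by omega), if_pos ht, if_pos (by omega)]
    exact (show t = p - 1 by omega) ▸ hx (by omega)
  · rw [if_neg (by omega), if_neg (by omega), Nat.add_sub_cancel]
    by_cases htp : t = p
    · rw [if_neg (by omega), if_pos htp]
      exact (hle t).trans (Nat.le_succ x)
    · rw [if_neg (by omega), if_neg htp]
      simpa [show t - 1 + 1 = t by omega] using hL (t - 1)

end List

theorem afterKth_le_length (L : List ℕ) (v k : ℕ) : afterKth L v k ≤ L.length := by
  fun_induction afterKth L v k <;> grind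

theorem count_take_afterKth (L : List ℕ) (v k : ℕ) (hk : k ≤ L.count v) :
    (L.take (afterKth L v k)).count v = k := by
  fun_induction afterKth L v k <;> grind

theorem getD_afterKth_sub_one (L : List ℕ) (v k : ℕ) (hk0 : k ≠ 0) (hk : k ≤ L.count v) :
    0 < afterKth L v k ∧ L.getD (afterKth L v k - 1) 0 = v := by
  fun_induction afterKth L v k <;> grind

theorem skipRun_le_length {L : List ℕ} {l a : ℕ} (ha : a ≤ L.length) :
    skipRun L l a ≤ L.length := by
  have := (List.takeWhile_sublist (fun x => decide (x = l)) (l := L.drop a)).length_le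
  simp only [skipRun, List.length_drop] at this ⊢
  omega

theorem skipRun_eq_length {L : List ℕ} {l a : ℕ} (ha : a ≤ L.length)
    (hL : ∀ x ∈ L, x = l) : skipRun L l a = L.length := by
  rw [skipRun, List.takeWhile_eq_self_iff.2 fun x hx => by
      simpa using hL x (List.mem_of_mem_drop hx),
    List.length_drop]
  omega

theorem take_skipRun (L : List ℕ) (l a : ℕ) :
    L.take (skipRun L l a) = L.take a ++ (L.drop a).takeWhile (· = l) := by
  rw [skipRun, List.take_add, (List.prefix_iff_eq_take.1 (List.takeWhile_prefix _)).symm]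

theorem skipRun_eq_add_findIdx (L : List ℕ) (l a : ℕ) :
    skipRun L l a = a + (L.drop a).findIdx (fun x => !decide (x = l)) := by
  rw [skipRun, List.takeWhile_eq_take_findIdx_not, List.length_take,
    min_eq_left List.findIdx_le_length]

theorem getD_eq_of_lt_skipRun {L : List ℕ} {l a s : ℕ} (has : a ≤ s)
    (hs : s < skipRun L l a) : L.getD s 0 = l := by
  obtain ⟨i, rfl⟩ := Nat.exists_eq_add_of_le has
  rw [skipRun_eq_add_findIdx, Nat.add_lt_add_iff_left] at hs
  have hi : i < (L.drop a).length := hs.trans_le List.findIdx_le_length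
  have := List.not_of_lt_findIdx hs
  rw [List.getD_eq_getElem _ _ (by simp at hi; omega)]
  simpa using this

theorem getD_skipRun_ne {L : List ℕ} {l a : ℕ} (hs : skipRun L l a < L.length) :
    L.getD (skipRun L l a) 0 ≠ l := by
  rw [skipRun_eq_add_findIdx] at hs ⊢
  have hk : (L.drop a).findIdx (fun x => !decide (x = l)) < (L.drop a).length := by
    simp only [List.length_drop]; omega
  have := List.findIdx_getElem (w := hk)
  rw [List.getD_eq_getElem _ _ hs]
  simpa using this

/-- The elements of level `< c` are the initial segment `{x | x < levelStart r c}`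
(`IsUIO.lt_levelStart_iff`). -/
def levelStart {n : ℕ} (r : Fin n → Fin n → Prop) [DecidableRel r] (c : ℕ) : ℕ :=
  #{x : Fin n | level r x < c}

theorem levelStart_succ {n : ℕ} (r : Fin n → Fin n → Prop) [DecidableRel r] (c : ℕ) :
    levelStart r (c + 1) = levelStart r c + #{x : Fin n | level r x = c} :=
  card_filter_or_of_disjoint (fun x => by omega) (fun x => by omega)

theorem exists_rel_of_level_eq_succ {n : ℕ} {r : Fin n → Fin n → Prop} [DecidableRel r]
    {j : Fin n} {c : ℕ} (hj : level r j = c + 1) : ∃ i, r i j ∧ level r i = c := by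
  rw [level.eq_1 r j] at hj
  have hne : (univ.filter (fun i => r i j ∧ i < j)).attach.Nonempty := by
    by_contra hemp
    simp [not_nonempty_iff_eq_empty.1 hemp] at hj
  obtain ⟨⟨i, hi⟩, -, hsup⟩ := exists_mem_eq_sup _ hne (fun i => level r i.1 + 1)
  simp only [mem_filter, mem_univ, true_and] at hi
  dsimp only at hsup
  exact ⟨i, hi.1, by omega⟩

namespace IsUIO

variable {n : ℕ} {r : Fin n → Fin n → Prop} [DecidableRel r]

theorem level_lt_of_rel (h : IsUIO r) {i j : Fin n} (hij : r i j) : level r i < level r j := by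
  rw [level.eq_1 r j]
  have hi : i ∈ univ.filter (fun i => r i j ∧ i < j) := by simp [hij, h.1 i j hij]
  exact Nat.lt_of_succ_le (le_sup (f := fun i => level r i.1 + 1) (mem_attach _ ⟨i, hi⟩))

theorem level_mono (h : IsUIO r) : Monotone (level r) := by
  intro x y hxy
  rw [level.eq_1 r x, level.eq_1 r y]
  refine Finset.sup_le fun ⟨i, hi⟩ _ => ?_
  simp only [mem_filter, mem_univ, true_and] at hi
  have hi' : i ∈ univ.filter (fun i => r i y ∧ i < y) := by
    simp [h.2 i x hi.1 i y le_rfl hxy, hi.2.trans_le hxy]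
  exact le_sup (f := fun i => level r i.1 + 1) (mem_attach _ ⟨i, hi'⟩)

theorem rel_of_level_add_two_le (h : IsUIO r) {x y : Fin n} (hxy : level r x + 2 ≤ level r y) :
    r x y := by
  obtain ⟨i, hiy, hi⟩ := exists_rel_of_level_eq_succ (r := r) (j := y) (c := level r y - 1)
    (by omega)
  have hxi : x ≤ i := le_of_lt <| lt_of_not_ge fun hix => by
    have := h.level_mono hix
    omega
  exact h.2 i y hiy x y hxi le_rfl

theorem lt_levelStart_iff (h : IsUIO r) (x : Fin n) (c : ℕ) :
    x.val < levelStart r c ↔ level r x < c := by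
  have key := mem_iff_card_filter_lt_lt_card (subset_univ {y : Fin n | level r y < c})
    (fun a _ b hb hab => by
      simp only [mem_filter, mem_univ, true_and] at hb ⊢
      exact (h.level_mono hab).trans_lt hb) (mem_univ x)
  rw [filter_gt_eq_Iio, Fin.card_Iio] at key
  simpa [levelStart] using key.symm

theorem level_eq_iff (h : IsUIO r) (x : Fin n) (c : ℕ) :
    level r x = c ↔ levelStart r c ≤ x.val ∧ x.val < levelStart r (c + 1) := by
  rw [h.lt_levelStart_iff, ← not_lt, h.lt_levelStart_iff]
  omega

theorem levelStart_add_card_filter (h : IsUIO r) (x : Fin n) :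
    levelStart r (level r x) + #{j : Fin n | j.val < x.val ∧ level r j = level r x} = x.val := by
  rw [levelStart, ← card_filter_or_of_disjoint (P := fun j : Fin n => j.val < x.val)
    (fun j => ?_) (fun j hj hj' => by omega)]
  · simp only [← Fin.lt_def]
    rw [filter_gt_eq_Iio, Fin.card_Iio]
  · constructor
    · intro hj
      have := h.level_mono (Fin.lt_def.2 hj).le
      omega
    · rintro (hj | ⟨hj, -⟩)
      · exact Fin.lt_def.1 (lt_of_not_ge fun hxj => (h.level_mono hxj).not_gt hj)
      · exact hj

theorem comparCount_eq_card (h : IsUIO r) (y : Fin n) :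
    comparCount r y = #{j : Fin n | level r j + 1 = level r y ∧ r j y} := by
  refine congrArg card (filter_congr fun j _ => and_congr_right fun hj => ?_)
  exact or_iff_left fun hyj => by have := h.level_lt_of_rel hyj; omega

theorem comparCount_mono (h : IsUIO r) {y y' : Fin n} (hlevel : level r y = level r y')
    (hle : y ≤ y') : comparCount r y ≤ comparCount r y' := by
  rw [h.comparCount_eq_card, h.comparCount_eq_card, ← hlevel]
  exact card_le_card <| monotone_filter_right _ fun j _ hj =>
    ⟨hj.1, h.2 j y hj.2 j y' le_rfl hle⟩

theorem comparCount_pos (h : IsUIO r) {y : Fin n} {c : ℕ} (hy : level r y = c + 1) :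
    0 < comparCount r y := by
  obtain ⟨i, hiy, hi⟩ := exists_rel_of_level_eq_succ hy
  rw [h.comparCount_eq_card, card_pos]
  exact ⟨i, by simp [hiy, hi, hy]⟩

theorem comparCount_le_card (h : IsUIO r) {y : Fin n} {c : ℕ} (hy : level r y = c + 1) :
    comparCount r y ≤ #{x : Fin n | x.val < y.val ∧ level r x = c} := by
  rw [h.comparCount_eq_card]
  exact card_le_card <| monotone_filter_right _ fun j _ hj =>
    ⟨Fin.lt_def.1 (h.1 j y hj.2), by omega⟩

/-- The predecessors of `y` one level below form an initial segment of that level. -/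
theorem rel_iff_lt_levelStart_add_comparCount (h : IsUIO r) {x y : Fin n} {c : ℕ}
    (hx : level r x = c) (hy : level r y = c + 1) :
    r x y ↔ x.val < levelStart r c + comparCount r y := by
  have key := mem_iff_card_filter_lt_lt_card
    (S := {j : Fin n | level r j + 1 = level r y ∧ r j y}) (T := {j : Fin n | level r j = c})
    (fun j hj => by simp only [mem_filter, mem_univ, true_and] at hj ⊢; omega)
    (fun a ha b hb hab => by
      simp only [mem_filter, mem_univ, true_and] at ha hb ⊢
      exact ⟨by omega, h.2 b y hb.2 a y hab le_rfl⟩)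
    (x := x) (by simp [hx])
  have hbelow :
      #((univ.filter fun j : Fin n => level r j = c).filter (· < x)) = x.val - levelStart r c := by
    rw [← h.levelStart_add_card_filter x, filter_filter, hx]
    simp only [Fin.lt_def, and_comm]
    omega
  rw [← h.comparCount_eq_card, hbelow] at key
  have := (h.level_eq_iff x c).1 hx
  simp only [mem_filter, mem_univ, true_and, hy, hx] at key
  rw [key]
  omega

end IsUIO

/-- The state of the insertion algorithm after the elements `0, …, m - 1` have been inserted.
The position `t` of `q` stands for the element `levelStart r w + #{s < t | q[s] = w}`,
where `w = q[t]`. -/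
structure IsPartListing {n : ℕ} (r : Fin n → Fin n → Prop) [DecidableRel r] (m : ℕ)
    (q : List ℕ) : Prop where
  length_eq : q.length = m
  count_eq : ∀ v, q.count v = #{x : Fin n | x.val < m ∧ level r x = v}
  getD_succ_le : ∀ t, q.getD (t + 1) 0 ≤ q.getD t 0 + 1
  comparCount_eq : ∀ t v (y : Fin n), q.getD t 0 = v + 1 →
    y.val = levelStart r (v + 1) + (q.take t).count (v + 1) →
    comparCount r y = (q.take t).count v

namespace IsPartListing

variable {n : ℕ} {r : Fin n → Fin n → Prop} [DecidableRel r] {M : Fin n} {q : List ℕ}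

theorem nil : IsPartListing r 0 [] where
  length_eq := rfl
  count_eq v := by simp
  getD_succ_le t := by simp
  comparCount_eq t v y := by simp

theorem getD_le_level (h : IsUIO r) (hq : IsPartListing r M q) (t : ℕ) :
    q.getD t 0 ≤ level r M := by
  rcases lt_or_ge t q.length with ht | ht
  · obtain ⟨x, hx⟩ :
        (univ.filter fun x : Fin n => x.val < M.val ∧ level r x = q.getD t 0).Nonempty := by
      rw [← card_pos, ← hq.count_eq, List.count_pos_iff, List.getD_eq_getElem _ _ ht]
      exact List.getElem_mem ht
    simp only [mem_filter, mem_univ, true_and] at hx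
    exact hx.2 ▸ h.level_mono (Fin.le_def.2 hx.1.le)
  · rw [List.getD_eq_default _ _ ht]
    exact Nat.zero_le _

theorem insertIdx (h : IsUIO r) (hq : IsPartListing r M q) {p : ℕ}
    (hp : p ≤ q.length)
    (hafter : ∀ t, p ≤ t → t < q.length → q.getD t 0 ≠ level r M)
    (hasc : 0 < p → level r M ≤ q.getD (p - 1) 0 + 1)
    (hcount : ∀ c, level r M = c + 1 → (q.take p).count c = comparCount r M) :
    IsPartListing r (M + 1 : ℕ) (q.insertIdx p (level r M)) where
  length_eq := by rw [List.length_insertIdx_of_le_length hp, hq.length_eq]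
  count_eq v := by
    rw [List.count_insertIdx _ _ _ hp, hq.count_eq]
    exact (Fin.card_filter_val_lt_succ M (fun x => level r x = v)).symm
  getD_succ_le := List.getD_succ_le_insertIdx hp hq.getD_succ_le (hq.getD_le_level h) hasc
  comparCount_eq t v y hQt hy := by
    rw [List.getD_insertIdx _ _ _ hp] at hQt
    split_ifs at hQt with htp htp'
    · rw [List.take_insertIdx_eq_take_of_le _ _ _ _ htp.le] at hy ⊢
      exact hq.comparCount_eq t v y hQt hy
    · subst htp'
      rw [List.take_insertIdx_eq_take_of_le _ _ _ _ le_rfl] at hy ⊢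
      have hyM : y = M := by
        have := h.levelStart_add_card_filter M
        rw [← hQt, List.count_take_eq_count_of_getD_ne hafter, hq.count_eq] at hy
        exact Fin.ext (hy.trans this)
      rw [hyM, hcount v hQt]
    · have ht := List.lt_length_of_getD_ne (L := q) (t := t - 1) (d := 0) (by omega)
      have hne : level r M ≠ v + 1 := fun heq => hafter (t - 1) (by omega) ht (hQt.trans heq.symm)
      have hlt : level r M ≠ v := by
        have : q.getD (t - 1) 0 ≤ level r M := hq.getD_le_level h (t - 1)
        omega
      rw [List.take_insertIdx_of_lt _ _ (by omega)] at hy ⊢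
      have hlen : p ≤ (q.take (t - 1)).length := by simp; omega
      rw [List.count_insertIdx _ _ _ hlen, if_neg hne, add_zero] at hy
      rw [List.count_insertIdx _ _ _ hlen, if_neg hlt, add_zero]
      exact hq.comparCount_eq (t - 1) v y hQt hy

/-- A letter `c + 1 = ℓ(M)` at or after the insertion position would stand for an element before
`M` on the same level, so it would have at most `C_M` letters `c` to its left. But the letters
climb by at most one from the insertion position, where they are `≤ c`, so a letter `c` after
the `C_M`-th one lies in between. -/
theorem getD_ne_of_skipRun_le (h : IsUIO r) (hq : IsPartListing r M q) {c : ℕ}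
    (hl : level r M = c + 1) {t : ℕ}
    (hpt : skipRun q (c + 1) (afterKth q c (comparCount r M)) ≤ t) (ht : t < q.length) :
    q.getD t 0 ≠ c + 1 := by
  intro hqt
  set a := afterKth q c (comparCount r M)
  have hcount_a : (q.take a).count c = comparCount r M :=
    count_take_afterKth q c _ (hq.count_eq c ▸ h.comparCount_le_card hl)
  have hk : (q.take t).count (c + 1) < q.count (c + 1) := by
    have := (q.count_take_lt_count_take_iff 0 ht (t' := q.length)).2 ht
    rwa [hqt, List.take_length] at this
  have hM : levelStart r (c + 1) + q.count (c + 1) = M.val := by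
    have := h.levelStart_add_card_filter M
    rwa [hl, ← hq.count_eq] at this
  set y : Fin n := ⟨levelStart r (c + 1) + (q.take t).count (c + 1), by omega⟩
  have hyM : y ≤ M := Fin.le_def.2 (by simp only [y]; omega)
  have hy : level r y = level r M := by
    refine le_antisymm (h.level_mono hyM) (hl ▸ ?_)
    exact not_lt.1 fun hlt => by have := (h.lt_levelStart_iff y _).2 hlt; simp [y] at this
  have hcy : (q.take t).count c ≤ comparCount r M :=
    hq.comparCount_eq t c y hqt rfl ▸ h.comparCount_mono hy hyM
  have hp_le : q.getD (skipRun q (c + 1) a) 0 ≤ c := by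
    have := getD_skipRun_ne (L := q) (l := c + 1) (a := a) (by omega)
    have : q.getD (skipRun q (c + 1) a) 0 ≤ level r M := hq.getD_le_level h _
    omega
  obtain ⟨u, hpu, hut, hu⟩ :=
    Nat.exists_eq_of_le_add_one (g := fun s => q.getD s 0) hq.getD_succ_le hpt hp_le (by omega)
  have hut : u < t := lt_of_le_of_ne hut fun hut => by rw [hut, hqt] at hu; omega
  have hau : a ≤ u := (Nat.le_add_right _ _).trans hpu
  have := q.count_take_le_count_take c hau
  have := (q.count_take_lt_count_take_iff 0 (hut.trans ht) (t' := t)).2 hut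
  rw [hu] at this
  omega

theorem insertIdx_skipRun (h : IsUIO r) (hq : IsPartListing r M q) :
    IsPartListing r (M + 1 : ℕ) (q.insertIdx (skipRun q (level r M)
      (afterKth q (level r M - 1) (comparCount r M))) (level r M)) := by
  have hle : ∀ t, q.getD t 0 ≤ level r M := hq.getD_le_level h
  obtain hl | ⟨c, hl⟩ : level r M = 0 ∨ ∃ c, level r M = c + 1 :=
    (Nat.eq_zero_or_eq_succ_pred _).imp_right fun hl => ⟨_, hl⟩
  · have hp : skipRun q (level r M) (afterKth q (level r M - 1) (comparCount r M)) = q.length :=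
      skipRun_eq_length (afterKth_le_length _ _ _) fun x hx => by
        obtain ⟨t, ht, rfl⟩ := List.getElem_of_mem hx
        have := hle t
        rw [List.getD_eq_getElem _ _ ht] at this
        omega
    rw [hp]
    exact hq.insertIdx h le_rfl (fun t ht ht' => by omega) (fun _ => by omega)
      (fun c hc => by omega)
  · rw [show level r M - 1 = c by omega]
    set a := afterKth q c (comparCount r M)
    have hCle : comparCount r M ≤ q.count c := hq.count_eq c ▸ h.comparCount_le_card hl
    have ha : a ≤ q.length := afterKth_le_length _ _ _
    obtain ⟨-, hqa⟩ := getD_afterKth_sub_one q c _ (h.comparCount_pos hl).ne' hCle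
    have hap : a ≤ skipRun q (level r M) a := Nat.le_add_right _ _
    refine hq.insertIdx h (skipRun_le_length ha) (fun t hpt ht => ?_) (fun _ => ?_)
      (fun c' hc' => ?_)
    · rw [hl] at hpt ⊢
      exact hq.getD_ne_of_skipRun_le h hl hpt ht
    · rcases hap.lt_or_eq with hlt | heq
      · rw [getD_eq_of_lt_skipRun (l := level r M) (a := a) (by omega) (by omega)]
        omega
      · rw [← heq, hqa, hl]
    · obtain rfl : c' = c := by omega
      rw [take_skipRun, List.count_append, count_take_afterKth q c' _ hCle, List.count_eq_zero.2,
        add_zero]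
      intro hmem
      have := List.mem_takeWhile_imp hmem
      simp only [decide_eq_true_eq] at this
      omega

end IsPartListing

theorem isPartListing_buildQ {n : ℕ} {r : Fin n → Fin n → Prop} [DecidableRel r] (h : IsUIO r)
    {m : ℕ} (hm : m ≤ n) : IsPartListing r m (buildQ r m) := by
  induction m with
  | zero => exact IsPartListing.nil
  | succ m ih =>
    rw [buildQ, dif_pos (show m < n by omega)]
    exact (ih (by omega)).insertIdx_skipRun (M := ⟨m, hm⟩) h

namespace IsPartListing

variable {n : ℕ} {r : Fin n → Fin n → Prop} [DecidableRel r] {W : List ℕ}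

theorem card_filter_getD_lt (hW : IsPartListing r n W) (c : ℕ) :
    #{i : Fin n | W.getD i 0 < c} = levelStart r c := by
  refine card_filter_lt_eq_of_card_filter_eq (fun v => ?_) c
  have hv : #{x : Fin n | level r x = v} = W.count v := by simpa using (hW.count_eq v).symm
  rw [hv, ← W.take_of_length_le hW.length_eq.le,
    W.count_take_eq_card_filter hW.length_eq v 0 le_rfl]
  simp

variable {f : Fin n ≃ Fin n} (hf : ∀ p q : Fin n, f p < f q ↔
  (W.getD p 0 < W.getD q 0 ∨ (W.getD p 0 = W.getD q 0 ∧ p < q)))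
include hf

theorem val_eq_levelStart_add_count (hW : IsPartListing r n W) (u : Fin n) :
    (f u).val = levelStart r (W.getD u 0) + (W.take u).count (W.getD u 0) := by
  rw [Fin.val_eq_card_filter_lt, filter_congr fun v _ => hf v u,
    card_filter_or_of_disjoint (fun v => Iff.rfl) (fun v hv hv' => by omega),
    hW.card_filter_getD_lt, W.count_take_eq_card_filter hW.length_eq _ 0 u.isLt.le]
  simp only [Fin.lt_def, and_comm]

theorem level_eq_getD (h : IsUIO r) (hW : IsPartListing r n W) (u : Fin n) :
    level r (f u) = W.getD u 0 := by
  have hu : u.val < W.length := hW.length_eq ▸ u.isLt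
  have hcount := (W.count_take_lt_count_take_iff 0 hu (t' := W.length)).2 hu
  rw [W.take_length, hW.count_eq] at hcount
  simp only [Fin.is_lt, true_and] at hcount
  rw [h.level_eq_iff, hW.val_eq_levelStart_add_count hf, levelStart_succ]
  omega

theorem rel_iff_lt (h : IsUIO r) (hW : IsPartListing r n W) {p q : Fin n}
    (hpq : W.getD q 0 = W.getD p 0 + 1) : r (f p) (f q) ↔ p < q := by
  have hcompar := hW.comparCount_eq q _ (f q) hpq (by rw [hW.val_eq_levelStart_add_count hf, hpq])
  rw [h.rel_iff_lt_levelStart_add_comparCount (hW.level_eq_getD hf h p)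
      ((hW.level_eq_getD hf h q).trans hpq), hW.val_eq_levelStart_add_count hf, hcompar,
    Nat.add_lt_add_iff_left, W.count_take_lt_count_take_iff 0 (hW.length_eq ▸ p.isLt), Fin.lt_def]

end IsPartListing

/-- For a unit interval order `U` with part listing `w = q(U)`,
the poset `P(w)` is isomorphic to `U` via the bijection `f` numbering the
positions of `w` by increasing letter value and, within equal letter values,
from left to right. -/
theorem prel_qList_iso {n : ℕ} (r : Fin n → Fin n → Prop) [DecidableRel r]
    (h : IsUIO r) (f : Fin n ≃ Fin n)
    (hf : ∀ p q : Fin n, f p < f q ↔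
      ((qList r).getD p 0 < (qList r).getD q 0 ∨
        ((qList r).getD p 0 = (qList r).getD q 0 ∧ p < q))) :
    ∀ p q : Fin n,
      Prel (fun i : Fin n => (qList r).getD i 0) p q ↔ r (f p) (f q) := by
  have hW : IsPartListing r n (qList r) := isPartListing_buildQ h le_rfl
  have hlevel := hW.level_eq_getD hf h
  intro p q
  constructor
  · rintro (hpq | ⟨hpq, hlt⟩)
    · exact h.rel_of_level_add_two_le (by rw [hlevel, hlevel]; exact hpq)
    · exact (hW.rel_iff_lt hf h hpq).2 hlt
  · intro hr
    have := h.level_lt_of_rel hr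
    rw [hlevel, hlevel] at this
    rcases (by omega : (qList r).getD p 0 + 2 ≤ (qList r).getD q 0 ∨
      (qList r).getD q 0 = (qList r).getD p 0 + 1) with hpq | hpq
    · exact Or.inl hpq
    · exact Or.inr ⟨hpq, (hW.rel_iff_lt hf h hpq).1 hr⟩
end

section
/- For every unit interval order U on {1,...,n}, there exists exactly one sequence w that is both the area sequence of a Dyck path (w_1=0 and w_i ≤ w_{i−1}+1) and such that the poset P(w) is isomorphic to U. -/
/-- An area sequence of a Dyck path: `a₁ = 0` and `aᵢ ≤ aᵢ₋₁ + 1`. -/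
def IsAreaSeq {n : ℕ} (w : Fin n → ℕ) : Prop :=
  (∀ h : 0 < n, w ⟨0, h⟩ = 0) ∧
  ∀ i : Fin n, ∀ h : i.val + 1 < n, w ⟨i.val + 1, h⟩ ≤ w i + 1

namespace UIOaux

/-- lexicographic key -/
def key {n : ℕ} (w : Fin n → ℕ) (i : Fin n) : ℕ := w i * n + i.val

theorem key_lt_iff {n : ℕ} (w : Fin n → ℕ) (i j : Fin n) :
    key w i < key w j ↔ (w i < w j ∨ (w i = w j ∧ i < j)) := by
  unfold key
  constructor
  · intro hk
    rcases lt_trichotomy (w i) (w j) with h | h | h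
    · exact Or.inl h
    · exact Or.inr ⟨h, by rw [h] at hk; exact Fin.lt_def.2 (by omega)⟩
    · exfalso
      have h2 : w j + 1 ≤ w i := h
      have h3 := Nat.mul_le_mul_right n h2
      have h4 : (w j + 1) * n = w j * n + n := by ring
      have hj : j.val < n := j.isLt
      omega
  · rintro (h | ⟨h, hij⟩)
    · have h2 : w i + 1 ≤ w j := h
      have h3 := Nat.mul_le_mul_right n h2
      have h4 : (w i + 1) * n = w i * n + n := by ring
      have hi : i.val < n := i.isLt
      omega
    · rw [h]
      have := Fin.lt_def.1 hij
      omega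

theorem key_injective {n : ℕ} (w : Fin n → ℕ) : Function.Injective (key w) := by
  intro i j hk
  by_contra hne
  rcases lt_or_gt_of_ne (fun h : i = j => hne h) with h | h
  · have h1 : key w i < key w j ∨ key w j < key w i := by
      rcases lt_trichotomy (w i) (w j) with h' | h' | h'
      · exact Or.inl ((key_lt_iff w i j).2 (Or.inl h'))
      · exact Or.inl ((key_lt_iff w i j).2 (Or.inr ⟨h', h⟩))
      · exact Or.inr ((key_lt_iff w j i).2 (Or.inl h'))
    omega
  · have h1 : key w j < key w i ∨ key w i < key w j := by
      rcases lt_trichotomy (w j) (w i) with h' | h' | h'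
      · exact Or.inl ((key_lt_iff w j i).2 (Or.inl h'))
      · exact Or.inl ((key_lt_iff w j i).2 (Or.inr ⟨h', h⟩))
      · exact Or.inr ((key_lt_iff w i j).2 (Or.inl h'))
    omega

theorem key_le_iff {n : ℕ} (w : Fin n → ℕ) (i j : Fin n) :
    key w i ≤ key w j ↔ (w i < w j ∨ (w i = w j ∧ i ≤ j)) := by
  rcases eq_or_ne i j with rfl | hne
  · simp
  · rw [le_iff_lt_or_eq]
    have := key_injective w (a₁ := i) (a₂ := j)
    rw [key_lt_iff]
    constructor
    · rintro (h | h)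
      · rcases h with h | ⟨h, hij⟩
        · exact Or.inl h
        · exact Or.inr ⟨h, le_of_lt hij⟩
      · exact absurd (this h) hne
    · rintro (h | ⟨h, hij⟩)
      · exact Or.inl (Or.inl h)
      · exact Or.inl (Or.inr ⟨h, lt_of_le_of_ne hij hne⟩)

theorem Prel_irrefl {n : ℕ} (w : Fin n → ℕ) (i : Fin n) : ¬ Prel w i i := by
  rintro (h | ⟨h, hlt⟩)
  · omega
  · exact lt_irrefl _ hlt

/-- Prel is compatible with the key order. -/
theorem Prel_mono {n : ℕ} (w : Fin n → ℕ) {i j i' j' : Fin n}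
    (h : Prel w i j) (hi : key w i' ≤ key w i) (hj : key w j ≤ key w j') :
    Prel w i' j' := by
  rw [key_le_iff] at hi hj
  rcases h with h | ⟨h, hij⟩
  · left
    rcases hi with hi | ⟨hi, _⟩ <;> rcases hj with hj | ⟨hj, _⟩ <;> omega
  · rcases hi with hi | ⟨hi, hii⟩ <;> rcases hj with hj | ⟨hj, hjj⟩
    · left; omega
    · left; omega
    · left; omega
    · right
      exact ⟨by omega, lt_of_le_of_lt hii (lt_of_lt_of_le hij hjj)⟩

/-- Two down-closed (w.r.t. an injective key) finsets with the same cardinality coincide. -/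
theorem lowset_subset {α : Type*} [DecidableEq α] (k : α → ℕ) (hk : Function.Injective k)
    (s t : Finset α)
    (hs : ∀ x ∈ s, ∀ y, k y < k x → y ∈ s)
    (ht : ∀ x ∈ t, ∀ y, k y < k x → y ∈ t)
    (hc : s.card ≤ t.card) : s ⊆ t := by
  intro x hx
  by_contra hxt
  have hsub : t ⊆ s.erase x := by
    intro y hy
    rcases lt_trichotomy (k y) (k x) with h | h | h
    · exact Finset.mem_erase.2 ⟨fun he => hxt (he ▸ hy), hs x hx y h⟩
    · exact absurd (hk h ▸ hy) hxt
    · exact absurd (ht y hy x h) hxt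
  have := Finset.card_le_card hsub
  have := Finset.card_erase_of_mem hx
  have hxs : 0 < s.card := Finset.card_pos.2 ⟨x, hx⟩
  omega

theorem lowset_eq {α : Type*} [DecidableEq α] (k : α → ℕ) (hk : Function.Injective k)
    (s t : Finset α)
    (hs : ∀ x ∈ s, ∀ y, k y < k x → y ∈ s)
    (ht : ∀ x ∈ t, ∀ y, k y < k x → y ∈ t)
    (hc : s.card = t.card) : s = t :=
  Finset.Subset.antisymm (lowset_subset k hk s t hs ht hc.le)
    (lowset_subset k hk t s ht hs hc.ge)

/-- cardinality of an initial segment of `Fin m` -/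
theorem card_val_lt {m c : ℕ} (hc : c ≤ m) :
    (Finset.univ.filter (fun x : Fin m => x.val < c)).card = c := by
  have : Finset.univ.filter (fun x : Fin m => x.val < c)
      = Finset.univ.map (Fin.castLEEmb hc) := by
    ext x
    simp only [Finset.mem_filter, Finset.mem_univ, true_and, Finset.mem_map]
    constructor
    · intro hx
      refine ⟨⟨x.val, hx⟩, ?_⟩
      ext; simp
    · rintro ⟨y, rfl⟩
      simpa using y.isLt
  rw [this, Finset.card_map, Finset.card_univ, Fintype.card_fin]

theorem card_filter_equiv {α : Type*} [Fintype α] [DecidableEq α] (g : Equiv.Perm α)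
    (Q : α → Prop) [DecidablePred Q] :
    (Finset.univ.filter (fun a => Q (g a))).card = (Finset.univ.filter Q).card := by
  apply Finset.card_bij (fun a _ => g a)
  · intro a ha
    simp only [Finset.mem_filter, Finset.mem_univ, true_and] at ha ⊢
    exact ha
  · intro a _ b _ hab
    exact g.injective hab
  · intro b hb
    refine ⟨g.symm b, ?_, by simp⟩
    simp only [Finset.mem_filter, Finset.mem_univ, true_and] at hb ⊢
    simpa using hb



/-- succAbove at a low raw index -/
theorem succAbove_low {n : ℕ} (P : Fin (n + 1)) {q : ℕ} (hq : q < n) (h : q < P.val) :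
    P.succAbove ⟨q, hq⟩ = ⟨q, Nat.lt_succ_of_lt hq⟩ := by
  rw [Fin.succAbove_of_castSucc_lt]
  · rfl
  · exact Fin.lt_def.2 h

theorem succAbove_high {n : ℕ} (P : Fin (n + 1)) {q : ℕ} (hq : q < n) (h : P.val ≤ q) :
    P.succAbove ⟨q, hq⟩ = ⟨q + 1, Nat.succ_lt_succ hq⟩ := by
  rw [Fin.succAbove_of_le_castSucc]
  · rfl
  · exact Fin.le_def.2 h

theorem succAbove_lt_self_iff {n : ℕ} (P : Fin (n + 1)) (i : Fin n) :
    P.succAbove i < P ↔ i.val < P.val := by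
  rw [Fin.succAbove_lt_iff_castSucc_lt, Fin.lt_def]
  rfl

theorem succAbove_val {n : ℕ} (P : Fin (n + 1)) (i : Fin n) :
    (P.succAbove i).val = if i.val < P.val then i.val else i.val + 1 := by
  rcases Nat.lt_or_ge i.val P.val with h | h
  · rw [succAbove_low P i.isLt h]; simp [h]
  · rw [succAbove_high P i.isLt h]; simp [Nat.not_lt.2 h]

/-- inserting a new maximum-key element keeps the area property -/
theorem area_insert {n : ℕ} (w' : Fin n → ℕ) (K : ℕ) (P : Fin (n + 1))
    (hw' : IsAreaSeq w') (hn : 0 < n) (hp : 1 ≤ P.val)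
    (hprev : K ≤ w' ⟨P.val - 1, by omega⟩ + 1)
    (hmax : ∀ i, w' i ≤ K) :
    IsAreaSeq (Fin.insertNth P K w') := by
  have hPn : P.val ≤ n := Nat.lt_succ_iff.1 P.isLt
  have hlow : ∀ (q : ℕ) (hq : q < n), q < P.val →
      Fin.insertNth (α := fun _ => ℕ) P K w' ⟨q, Nat.lt_succ_of_lt hq⟩ = w' ⟨q, hq⟩ := by
    intro q hq h
    have h2 := Fin.insertNth_apply_succAbove (α := fun _ => ℕ) P K w' ⟨q, hq⟩
    rw [succAbove_low P hq h] at h2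
    exact h2
  have hhigh : ∀ (q : ℕ) (hq : q < n), P.val ≤ q →
      Fin.insertNth (α := fun _ => ℕ) P K w' ⟨q + 1, Nat.succ_lt_succ hq⟩ = w' ⟨q, hq⟩ := by
    intro q hq h
    have h2 := Fin.insertNth_apply_succAbove (α := fun _ => ℕ) P K w' ⟨q, hq⟩
    rw [succAbove_high P hq h] at h2
    exact h2
  have hsame : Fin.insertNth (α := fun _ => ℕ) P K w' P = K := Fin.insertNth_apply_same (α := fun _ => ℕ) P K w'
  constructor
  · intro _
    have h0 : (0 : ℕ) < P.val := hp
    rw [hlow 0 hn h0]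
    exact hw'.1 hn
  · intro i hi
    set q := i.val with hqdef
    have hq1 : q + 1 < n + 1 := hi
    have hieq : i = ⟨q, i.isLt⟩ := by ext; rfl
    rcases Nat.lt_trichotomy (q + 1) P.val with h | h | h
    · -- both below P
      have hq1n : q + 1 < n := by omega
      have hqn : q < n := by omega
      rw [show (⟨q + 1, hi⟩ : Fin (n+1)) = ⟨q + 1, Nat.lt_succ_of_lt hq1n⟩ from rfl,
        hlow (q+1) hq1n h]
      have : (i : Fin (n+1)) = ⟨q, Nat.lt_succ_of_lt hqn⟩ := by ext; rfl
      rw [this, hlow q hqn (by omega)]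
      exact hw'.2 ⟨q, hqn⟩ hq1n
    · -- the new element
      have hqn : q < n := by omega
      have : (⟨q + 1, hi⟩ : Fin (n+1)) = P := by ext; simp [← h]
      rw [this, hsame]
      have : (i : Fin (n+1)) = ⟨q, Nat.lt_succ_of_lt hqn⟩ := by ext; rfl
      rw [this, hlow q hqn (by omega)]
      have : (⟨q, hqn⟩ : Fin n) = ⟨P.val - 1, by omega⟩ := by ext; simp; omega
      rw [this]; exact hprev
    · -- above P
      rcases Nat.eq_or_lt_of_le h with h' | h'
      · -- q = P.val : next after new element
        have hqn : q < n := by omega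
        rw [show (⟨q + 1, hi⟩ : Fin (n+1)) = ⟨q + 1, Nat.succ_lt_succ hqn⟩ from rfl,
          hhigh q hqn (by omega)]
        have : (i : Fin (n+1)) = P := by ext; omega
        rw [this, hsame]
        have := hmax ⟨q, hqn⟩
        omega
      · -- strictly above
        have hqn : q < n := by omega
        have hq0 : 1 ≤ q := by omega
        rw [show (⟨q + 1, hi⟩ : Fin (n+1)) = ⟨q + 1, Nat.succ_lt_succ hqn⟩ from rfl,
          hhigh q hqn (by omega)]
        have hqm : q - 1 < n := by omega
        have : (i : Fin (n+1)) = ⟨(q-1) + 1, Nat.succ_lt_succ hqm⟩ := by ext; simp; omega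
        rw [this, hhigh (q-1) hqm (by omega)]
        have := hw'.2 ⟨q - 1, hqm⟩ (by simp; omega)
        convert this using 3 <;> simp <;> omega




/-- transport of `Prel` along `succAbove` : relation between `w` and `removeNth P w`. -/
theorem Prel_removeNth {n : ℕ} (w : Fin (n + 1) → ℕ) (P : Fin (n + 1)) (i j : Fin n) :
    Prel (P.removeNth w) i j ↔ Prel w (P.succAbove i) (P.succAbove j) := by
  unfold Prel Fin.removeNth
  rw [Fin.succAbove_lt_succAbove_iff]

theorem key_removeNth {n : ℕ} (w : Fin (n + 1) → ℕ) (P : Fin (n + 1)) (i j : Fin n) :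
    key (P.removeNth w) i < key (P.removeNth w) j ↔
      key w (P.succAbove i) < key w (P.succAbove j) := by
  rw [key_lt_iff, key_lt_iff]
  unfold Fin.removeNth
  rw [Fin.succAbove_lt_succAbove_iff]

/-- removing the key-maximal element keeps the area property -/
theorem area_remove {n : ℕ} (w : Fin (n + 1) → ℕ) (P : Fin (n + 1))
    (hw : IsAreaSeq w) (hmax : ∀ x, x ≠ P → key w x < key w P) :
    IsAreaSeq (P.removeNth w) := by
  rcases Nat.eq_zero_or_pos n with rfl | hn
  · exact ⟨fun h => absurd h (lt_irrefl 0), fun i h => absurd i.isLt (by omega)⟩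
  have hrem : ∀ (q : ℕ) (hq : q < n), (P.removeNth w) ⟨q, hq⟩ =
      w (P.succAbove ⟨q, hq⟩) := fun _ _ => rfl
  have hval : ∀ i, i ≠ P → (w i < w P ∨ (w i = w P ∧ i < P)) := by
    intro i hi
    exact (key_lt_iff w i P).1 (hmax i hi)
  have hstep : ∀ (q : ℕ) (h : q + 1 < n + 1), w ⟨q+1, h⟩ ≤ w ⟨q, Nat.lt_of_succ_lt h⟩ + 1 := by
    intro q h
    exact hw.2 ⟨q, Nat.lt_of_succ_lt h⟩ h
  have hp : 1 ≤ P.val := by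
    by_contra h0
    have hP0 : P = ⟨0, Nat.succ_pos n⟩ := Fin.ext (show P.val = 0 by omega)
    have h1n : (1 : ℕ) < n + 1 := by omega
    have h1 : ((⟨1, h1n⟩ : Fin (n+1))) ≠ P := by
      rw [hP0]; intro hcon; simpa using congrArg Fin.val hcon
    have hC := hval _ h1
    have hB : w P = 0 := by rw [hP0]; exact hw.1 (Nat.succ_pos n)
    have hA : w ⟨1, h1n⟩ ≤ w P + 1 := by rw [hP0]; exact hstep 0 h1n
    rcases hC with hC | ⟨hC, hlt⟩
    · omega
    · have hlt2 : (1 : ℕ) < P.val := hlt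
      omega
  constructor
  · intro h
    rw [hrem 0 h, succAbove_low P h hp]
    exact hw.1 _
  · intro i hi
    obtain ⟨q, hqn⟩ := i
    have hq1n : q + 1 < n := hi
    rw [hrem q hqn, hrem (q+1) hq1n]
    rcases Nat.lt_trichotomy (q + 1) P.val with h | h | h
    · rw [succAbove_low P hqn (Nat.lt_of_succ_lt h), succAbove_low P hq1n h]
      exact hstep q (Nat.lt_succ_of_lt hq1n)
    · -- q + 1 = P.val : skip over P
      rw [succAbove_low P hqn (h ▸ Nat.lt_succ_self q), succAbove_high P hq1n (Nat.le_of_eq h.symm)]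
      have hq2 : q + 1 + 1 < n + 1 := Nat.succ_lt_succ hq1n
      have hPeq : P = ⟨q + 1, Nat.lt_succ_of_lt hq1n⟩ := Fin.ext (show P.val = q + 1 by omega)
      have harea : w P ≤ w ⟨q, Nat.lt_of_succ_lt (Nat.lt_succ_of_lt hq1n)⟩ + 1 := by
        rw [hPeq]; exact hstep q (Nat.lt_succ_of_lt hq1n)
      have hne : (⟨q + 1 + 1, hq2⟩ : Fin (n+1)) ≠ P := by
        rw [hPeq]; intro hcon; simpa using congrArg Fin.val hcon
      have h2 := hval _ hne
      have hwc : w ⟨q, Nat.lt_of_succ_lt (Nat.lt_succ_of_lt hq1n)⟩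
          = w ⟨q, Nat.lt_succ_of_lt hqn⟩ := rfl
      rw [hwc] at harea
      rcases h2 with h2 | ⟨h2, hlt⟩
      · omega
      · have : (q + 1 + 1 : ℕ) < P.val := hlt
        omega
    · rw [succAbove_high P hqn (Nat.le_of_lt_succ h),
        succAbove_high P hq1n (by omega)]
      exact hstep (q+1) (Nat.succ_lt_succ hq1n)

/-- the sandwich equivalence used to extend a permutation -/
def extEquiv {n : ℕ} (P : Fin (n + 1)) (e' : Fin n ≃ Fin n) : Fin (n + 1) ≃ Fin (n + 1) :=
  (finSuccEquiv' P).trans ((Equiv.optionCongr e').trans (finSuccEquiv' (Fin.last n)).symm)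

theorem extEquiv_same {n : ℕ} (P : Fin (n + 1)) (e' : Fin n ≃ Fin n) :
    extEquiv P e' P = Fin.last n := by
  simp [extEquiv, finSuccEquiv'_at]

theorem extEquiv_succAbove {n : ℕ} (P : Fin (n + 1)) (e' : Fin n ≃ Fin n) (i : Fin n) :
    extEquiv P e' (P.succAbove i) = (e' i).castSucc := by
  simp only [extEquiv, Equiv.trans_apply, finSuccEquiv'_succAbove, Equiv.optionCongr_apply,
    Option.map_some]
  rw [← Fin.succAbove_last, finSuccEquiv'_symm_some]

/-- the sandwich equivalence used to restrict a permutation `s` with pivot `s (last)`. -/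
def resEquiv {n : ℕ} (s : Equiv.Perm (Fin (n + 1))) : Equiv.Perm (Fin n) :=
  Equiv.removeNone ((finSuccEquiv' (Fin.last n)).symm.trans
    (s.trans (finSuccEquiv' (s (Fin.last n)))))

theorem resEquiv_spec {n : ℕ} (s : Equiv.Perm (Fin (n + 1))) (a : Fin n) :
    (s (Fin.last n)).succAbove (resEquiv s a) = s (a.castSucc) := by
  set E := (finSuccEquiv' (Fin.last n)).symm.trans
    (s.trans (finSuccEquiv' (s (Fin.last n)))) with hE
  have hsome : ∃ b, E (some a) = some b := by
    have h1 : E (some a) = finSuccEquiv' (s (Fin.last n)) (s (a.castSucc)) := by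
      simp only [hE, Equiv.trans_apply]
      congr 2
      rw [← Fin.succAbove_last, finSuccEquiv'_symm_some]
    have hne : s (a.castSucc) ≠ s (Fin.last n) := by
      intro hcon
      exact absurd (s.injective hcon) (Fin.ne_of_lt (Fin.castSucc_lt_last a))
    rcases Fin.exists_succAbove_eq hne with ⟨b, hb⟩
    exact ⟨b, by rw [h1, ← hb, finSuccEquiv'_succAbove]⟩
  have h2 := Equiv.removeNone_some E hsome
  have h3 : E (some a) = finSuccEquiv' (s (Fin.last n)) (s (a.castSucc)) := by
    simp only [hE, Equiv.trans_apply]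
    congr 2
    rw [← Fin.succAbove_last, finSuccEquiv'_symm_some]
  rw [h3] at h2
  have h4 := congrArg (finSuccEquiv' (s (Fin.last n))).symm h2
  rw [Equiv.symm_apply_apply] at h4
  rw [← h4, finSuccEquiv'_symm_some]
  rfl




theorem exists_good (n : ℕ) (r : Fin n → Fin n → Prop) (hU : IsUIO r) :
    ∃ (w : Fin n → ℕ) (e : Fin n ≃ Fin n), IsAreaSeq w ∧
      (∀ i j, Prel w i j ↔ r (e i) (e j)) ∧
      (∀ i j, e i < e j ↔ key w i < key w j) := by
  induction n with
  | zero =>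
      exact ⟨fun _ => 0, Equiv.refl _,
        ⟨fun h => absurd h (lt_irrefl _), fun i => i.elim0⟩,
        fun i => i.elim0, fun i => i.elim0⟩
  | succ n IH =>
    classical
    rcases Nat.eq_zero_or_pos n with rfl | hn
    · -- Fin 1
      refine ⟨fun _ => 0, Equiv.refl _,
        ⟨fun _ => rfl, fun i hi => absurd hi (by omega)⟩, ?_, ?_⟩
      · intro i j
        have hij : i = j := by
          have h1 : i.val < 1 := i.isLt
          have h2 : j.val < 1 := j.isLt
          exact Fin.ext (by omega)
        subst hij
        simp only [Equiv.refl_apply]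
        constructor
        · intro hP; exact absurd hP (Prel_irrefl _ i)
        · intro hr; exact absurd (hU.1 i i hr) (lt_irrefl i)
      · intro i j
        have hij : i = j := by
          have h1 : i.val < 1 := i.isLt
          have h2 : j.val < 1 := j.isLt
          exact Fin.ext (by omega)
        subst hij
        simp
    -- main case : n ≥ 1
    set r' : Fin n → Fin n → Prop := fun i j => r i.castSucc j.castSucc with hr'
    have hU' : IsUIO r' := by
      constructor
      · intro x y hxy
        have := hU.1 _ _ hxy
        exact (Fin.castSucc_lt_castSucc_iff).1 this
      · intro x y hxy x' y' hx hy
        exact hU.2 _ _ hxy _ _ (Fin.castSucc_le_castSucc_iff.2 hx)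
          (Fin.castSucc_le_castSucc_iff.2 hy)
    obtain ⟨w', e', hw', hiff', hlex'⟩ := IH r' hU'
    -- the down-count of the new (maximal) element
    set c := (Finset.univ.filter (fun x : Fin (n+1) => r x (Fin.last n))).card with hc
    have hlast_not : ¬ r (Fin.last n) (Fin.last n) := fun hr0 => absurd (hU.1 _ _ hr0) (lt_irrefl _)
    have hcn : c ≤ n := by
      have hsub : Finset.univ.filter (fun x : Fin (n+1) => r x (Fin.last n)) ⊆
          Finset.univ.erase (Fin.last n) := by
        intro x hx
        rcases Finset.mem_filter.1 hx with ⟨-, hx2⟩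
        refine Finset.mem_erase.2 ⟨?_, Finset.mem_univ _⟩
        rintro rfl; exact hlast_not hx2
      have := Finset.card_le_card hsub
      rw [Finset.card_erase_of_mem (Finset.mem_univ _), Finset.card_univ] at this
      simpa using this
    have hdown : ∀ x : Fin (n+1), r x (Fin.last n) ↔ x.val < c := by
      have hEq : Finset.univ.filter (fun x : Fin (n+1) => r x (Fin.last n)) =
          Finset.univ.filter (fun x : Fin (n+1) => x.val < c) := by
        apply lowset_eq (fun x : Fin (n+1) => x.val) (fun a b hab => Fin.ext hab)
        · intro x hx y hy
          rcases Finset.mem_filter.1 hx with ⟨-, hx2⟩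
          refine Finset.mem_filter.2 ⟨Finset.mem_univ _, ?_⟩
          exact hU.2 _ _ hx2 _ _ (le_of_lt hy) (le_refl _)
        · intro x hx y hy
          rcases Finset.mem_filter.1 hx with ⟨-, hx2⟩
          exact Finset.mem_filter.2 ⟨Finset.mem_univ _, by omega⟩
        · rw [← hc, card_val_lt (le_of_lt (Nat.lt_succ_of_le hcn))]
      intro x
      have := Finset.ext_iff.1 hEq x
      simp only [Finset.mem_filter, Finset.mem_univ, true_and] at this
      exact this
    have hmemc : ∀ i j : Fin n, Prel w' i j → (e' i).val < c := by
      intro i j hP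
      have h1 : r' (e' i) (e' j) := (hiff' i j).1 hP
      have h2 : r (e' i).castSucc (e' j).castSucc := h1
      have h3 : r (e' i).castSucc (Fin.last n) :=
        hU.2 _ _ h2 _ _ (le_refl _) (Fin.le_last _)
      have := (hdown _).1 h3
      simpa using this
    -- rank of an element in the key order
    set RS : Fin n → Finset (Fin n) :=
      fun i => Finset.univ.filter (fun j => key w' j < key w' i) with hRS
    have hrank : ∀ i, (e' i).val = (RS i).card := by
      intro i
      have h1 : RS i = Finset.univ.filter (fun j => e' j < e' i) := by
        apply Finset.filter_congr
        intro j _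
        exact (hlex' j i).symm
      have h2 : (Finset.univ.filter (fun j => e' j < e' i)).card =
          (Finset.univ.filter (fun x : Fin n => x < e' i)).card :=
        card_filter_equiv e' (fun x => x < e' i)
      have h3 : (Finset.univ.filter (fun x : Fin n => x < e' i)).card = (e' i).val := by
        have : (Finset.univ.filter (fun x : Fin n => x < e' i)) =
            (Finset.univ.filter (fun x : Fin n => x.val < (e' i).val)) := by
          apply Finset.filter_congr; intro j _; exact Fin.lt_def
        rw [this, card_val_lt (le_of_lt (e' i).isLt)]
      rw [h1, h2, h3]
    -- max value and its last position
    have hne : (Finset.univ : Finset (Fin n)).Nonempty := ⟨⟨0, hn⟩, Finset.mem_univ _⟩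
    set Kb := Finset.sup' Finset.univ hne w' with hKbdef
    have hKb : ∀ i, w' i ≤ Kb := fun i => Finset.le_sup' w' (Finset.mem_univ i)
    obtain ⟨jmax, -, hjmax⟩ := Finset.exists_mem_eq_sup' hne w'
    set Sk := Finset.univ.filter (fun i => w' i = Kb) with hSk
    have hSkne : Sk.Nonempty := ⟨jmax, Finset.mem_filter.2 ⟨Finset.mem_univ _, hjmax.symm⟩⟩
    set jstar := Sk.max' hSkne with hjstar
    have hjs : w' jstar = Kb := (Finset.mem_filter.1 (Sk.max'_mem hSkne)).2
    have hjsmax : ∀ i, w' i = Kb → i ≤ jstar := fun i hi =>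
      Finset.le_max' Sk i (Finset.mem_filter.2 ⟨Finset.mem_univ _, hi⟩)
    set D := (Finset.univ.filter (fun i => w' i < Kb)).card with hD
    set K := if c ≤ D then Kb else Kb + 1 with hK
    have hKKb : Kb ≤ K := by rw [hK]; split <;> omega
    have hmaxK : ∀ i, w' i ≤ K := fun i => le_trans (hKb i) hKKb
    set C := Finset.univ.filter (fun i => w' i + 1 = K) with hC
    set T := Finset.univ.filter (fun i => (e' i).val < c) with hT
    have hTcard : T.card = c := by
      rw [hT]
      have := card_filter_equiv e' (fun x : Fin n => x.val < c)
      rw [this, card_val_lt hcn]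
    have hTdc : ∀ i ∈ T, ∀ j, key w' j < key w' i → j ∈ T := by
      intro i hi j hj
      have h1 : e' j < e' i := (hlex' j i).2 hj
      have h2 := (Finset.mem_filter.1 hi).2
      refine Finset.mem_filter.2 ⟨Finset.mem_univ _, ?_⟩
      have := Fin.lt_def.1 h1
      omega
    set Sp := (T ∩ C) ∪ (Finset.univ.filter (fun i => w' i = K)) with hSp
    set p := Sp.sup (fun i => i.val + 1) with hp
    have hpn : p ≤ n := Finset.sup_le (fun i _ => i.isLt)
    set P : Fin (n+1) := ⟨p, Nat.lt_succ_of_le hpn⟩ with hP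
    -- the set of elements with value < Kb is contained in any rank set of a Kb-element
    have hDsub : ∀ i, w' i = Kb → (Finset.univ.filter (fun j => w' j < Kb)) ⊆ RS i := by
      intro i hi j hj
      have h1 := (Finset.mem_filter.1 hj).2
      refine Finset.mem_filter.2 ⟨Finset.mem_univ _, ?_⟩
      exact (key_lt_iff w' j i).2 (Or.inl (by omega))
    -- Sp is nonempty, so 1 ≤ p
    have hSpne : Sp.Nonempty := by
      by_cases hcase : c ≤ D
      · have hKeq : K = Kb := by rw [hK, if_pos hcase]
        refine ⟨jstar, Finset.mem_union_right _ ?_⟩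
        exact Finset.mem_filter.2 ⟨Finset.mem_univ _, by rw [hKeq]; exact hjs⟩
      · have hKeq : K = Kb + 1 := by rw [hK, if_neg hcase]
        set i0 := Sk.min' hSkne with hi0
        have hi0v : w' i0 = Kb := (Finset.mem_filter.1 (Sk.min'_mem hSkne)).2
        have hi0min : ∀ i, w' i = Kb → i0 ≤ i := fun i hi =>
          Finset.min'_le Sk i (Finset.mem_filter.2 ⟨Finset.mem_univ _, hi⟩)
        refine ⟨i0, Finset.mem_union_left _ (Finset.mem_inter.2 ⟨?_, ?_⟩)⟩
        · -- i0 ∈ T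
          have hsub : RS i0 ⊆ Finset.univ.filter (fun j => w' j < Kb) := by
            intro j hj
            have h1 := (Finset.mem_filter.1 hj).2
            rcases (key_lt_iff w' j i0).1 h1 with h2 | ⟨h2, h3⟩
            · exact Finset.mem_filter.2 ⟨Finset.mem_univ _, by omega⟩
            · exfalso
              have := hi0min j (by omega)
              exact absurd h3 (not_lt.2 this)
          have := Finset.card_le_card hsub
          rw [← hrank i0, ← hD] at this
          refine Finset.mem_filter.2 ⟨Finset.mem_univ _, by omega⟩
        · exact Finset.mem_filter.2 ⟨Finset.mem_univ _, by omega⟩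
    have hp1 : 1 ≤ p := by
      obtain ⟨i, hi⟩ := hSpne
      have h2 := Finset.le_sup (f := fun i : Fin n => i.val + 1) hi
      rw [← hp] at h2
      have h3 : i.val + 1 ≤ p := h2
      omega
    -- the element just before position p
    obtain ⟨qq, hqqSp, hqq⟩ := Finset.exists_mem_eq_sup Sp hSpne (fun i : Fin n => i.val + 1)
    have hqqval : qq.val + 1 = p := by rw [hp]; exact hqq.symm
    -- A-set bound
    set Aset := Finset.univ.filter (fun j => w' j + 2 ≤ K) with hAset
    have hAc : Aset.card ≤ c := by
      by_cases hcase : c ≤ D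
      · have hKeq : K = Kb := by rw [hK, if_pos hcase]
        have hsub : Aset ⊆ T := by
          intro i hi
          have h1 := (Finset.mem_filter.1 hi).2
          have hPrel : Prel w' i jstar := Or.inl (by omega)
          exact Finset.mem_filter.2 ⟨Finset.mem_univ _, hmemc i jstar hPrel⟩
        have := Finset.card_le_card hsub
        omega
      · have hKeq : K = Kb + 1 := by rw [hK, if_neg hcase]
        have hEq : Aset = Finset.univ.filter (fun j => w' j < Kb) := by
          apply Finset.filter_congr; intro j _
          constructor <;> (intro; omega)
        rw [hEq, ← hD]
        omega
    have hrankA : ∀ i, w' i + 2 ≤ K → (e' i).val < c := by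
      intro i hi
      have hsub : insert i (RS i) ⊆ Aset := by
        intro j hj
        rcases Finset.mem_insert.1 hj with rfl | hj2
        · exact Finset.mem_filter.2 ⟨Finset.mem_univ _, hi⟩
        · have h1 := (Finset.mem_filter.1 hj2).2
          have h2 : w' j ≤ w' i := by
            rcases (key_lt_iff w' j i).1 h1 with h | ⟨h, -⟩ <;> omega
          exact Finset.mem_filter.2 ⟨Finset.mem_univ _, by omega⟩
      have hnotmem : i ∉ RS i := by
        intro hcon
        exact absurd ((Finset.mem_filter.1 hcon).2) (lt_irrefl _)
      have h3 := Finset.card_le_card hsub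
      rw [Finset.card_insert_of_notMem hnotmem] at h3
      have := hrank i
      omega
    -- MAIN : characterization of the down-set of the new element
    have HDS : ∀ i : Fin n, (w' i + 2 ≤ K ∨ (w' i + 1 = K ∧ i.val < p)) ↔ (e' i).val < c := by
      intro i
      constructor
      · rintro (hi | ⟨hi, hip⟩)
        · exact hrankA i hi
        · -- i ∈ C and i before p
          have hiq : i ≤ qq := by
            rw [← hqqval] at hip
            exact Fin.le_def.2 (by omega)
          rcases Finset.mem_union.1 hqqSp with hq1 | hq2
          · -- qq ∈ T ∩ C
            obtain ⟨hqT, hqC⟩ := Finset.mem_inter.1 hq1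
            have hqv : w' qq + 1 = K := (Finset.mem_filter.1 hqC).2
            rcases eq_or_lt_of_le hiq with rfl | hilt
            · exact (Finset.mem_filter.1 hqT).2
            · have hkey : key w' i < key w' qq :=
                (key_lt_iff w' i qq).2 (Or.inr ⟨by omega, hilt⟩)
              exact (Finset.mem_filter.1 (hTdc qq hqT i hkey)).2
          · -- qq has value K, so K = Kb and qq ≤ jstar
            have hqv : w' qq = K := (Finset.mem_filter.1 hq2).2
            have hKeq : K = Kb := by
              have := hKb qq; omega
            have hqjs : qq ≤ jstar := hjsmax qq (by omega)
            have hijs : i < jstar := by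
              have h1 : i ≤ jstar := le_trans hiq hqjs
              rcases eq_or_lt_of_le h1 with rfl | h2
              · exfalso; omega
              · exact h2
            have hPrel : Prel w' i jstar := Or.inr ⟨by omega, hijs⟩
            exact hmemc i jstar hPrel
      · intro hi
        by_cases h1 : w' i + 2 ≤ K
        · exact Or.inl h1
        by_cases h2 : w' i + 1 = K
        · refine Or.inr ⟨h2, ?_⟩
          have hiSp : i ∈ Sp := Finset.mem_union_left _ (Finset.mem_inter.2
            ⟨Finset.mem_filter.2 ⟨Finset.mem_univ _, hi⟩,
             Finset.mem_filter.2 ⟨Finset.mem_univ _, h2⟩⟩)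
          have h4 := Finset.le_sup (f := fun i : Fin n => i.val + 1) hiSp
          rw [← hp] at h4
          have h5 : i.val + 1 ≤ p := h4
          omega
        · exfalso
          -- w' i ≥ K, forcing K = Kb and c ≤ D, contradiction
          have h3 : w' i = K := by
            have := hmaxK i; omega
          have hKeq : K = Kb := by
            have := hKb i; omega
          have hcase : c ≤ D := by
            by_contra hcon
            rw [hK, if_neg hcon] at hKeq
            omega
          have hsub := hDsub i (by omega)
          have h4 := Finset.card_le_card hsub
          have := hrank i
          omega
    -- now build the new sequence and equivalence
    obtain ⟨w, hw⟩ : ∃ w : Fin (n+1) → ℕ, w = Fin.insertNth (α := fun _ => ℕ) P K w' :=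
      ⟨_, rfl⟩
    obtain ⟨e, he⟩ : ∃ e : Fin (n+1) ≃ Fin (n+1), e = extEquiv P e' := ⟨_, rfl⟩
    have hwP : w P = K := by
      rw [hw]; exact Fin.insertNth_apply_same (α := fun _ => ℕ) P K w'
    have hwold : ∀ i : Fin n, w (P.succAbove i) = w' i := by
      intro i
      rw [hw]; exact Fin.insertNth_apply_succAbove (α := fun _ => ℕ) P K w' i
    have hrm : P.removeNth w = w' := by
      rw [hw]; exact Fin.removeNth_insertNth (α := fun _ => ℕ) P K w'
    have hsplit : ∀ x : Fin (n+1), x = P ∨ ∃ i : Fin n, P.succAbove i = x := by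
      intro x
      rcases eq_or_ne x P with rfl | hxP
      · exact Or.inl rfl
      · exact Or.inr (Fin.exists_succAbove_eq hxP)
    have hkeymax : ∀ i : Fin n, key w (P.succAbove i) < key w P := by
      intro i
      rw [key_lt_iff, hwP, hwold]
      rcases eq_or_lt_of_le (hmaxK i) with heq | hlt
      · refine Or.inr ⟨heq, ?_⟩
        have hiSp : i ∈ Sp := Finset.mem_union_right _
          (Finset.mem_filter.2 ⟨Finset.mem_univ _, heq⟩)
        have h4 := Finset.le_sup (f := fun i : Fin n => i.val + 1) hiSp
        rw [← hp] at h4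
        have h5 : i.val + 1 ≤ p := h4
        rw [succAbove_lt_self_iff]
        show i.val < p
        omega
      · exact Or.inl hlt
    have harea : IsAreaSeq w := by
      rw [hw]
      refine area_insert w' K P hw' hn hp1 ?_ hmaxK
      have hqeq : (⟨P.val - 1, by omega⟩ : Fin n) = qq := by
        apply Fin.ext; show p - 1 = qq.val; omega
      rw [hqeq]
      rcases Finset.mem_union.1 hqqSp with hq1 | hq2
      · have := (Finset.mem_filter.1 (Finset.mem_inter.1 hq1).2).2
        omega
      · have := (Finset.mem_filter.1 hq2).2
        omega
    have heP : e P = Fin.last n := by rw [he]; exact extEquiv_same P e'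
    have heold : ∀ i, e (P.succAbove i) = (e' i).castSucc := by
      intro i; rw [he]; exact extEquiv_succAbove P e' i
    have hiff : ∀ x y : Fin (n+1), Prel w x y ↔ r (e x) (e y) := by
      intro x y
      rcases hsplit x with rfl | ⟨i, rfl⟩ <;> rcases hsplit y with rfl | ⟨j, rfl⟩
      · constructor
        · intro hP0; exact absurd hP0 (Prel_irrefl _ _)
        · intro hr0; exact absurd (hU.1 _ _ hr0) (lt_irrefl _)
      · -- new, old : both false
        rw [heP, heold]
        constructor
        · rintro (h | ⟨h, -⟩) <;>
          · rw [hwP, hwold] at *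
            have := hmaxK j
            omega
        · intro hr0
          have := hU.1 _ _ hr0
          exact absurd this (not_lt.2 (le_of_lt (Fin.castSucc_lt_last _)))
      · -- old, new
        rw [heold, heP]
        have hchar : Prel w (P.succAbove i) P ↔
            (w' i + 2 ≤ K ∨ (w' i + 1 = K ∧ i.val < p)) := by
          unfold Prel
          rw [hwP, hwold, succAbove_lt_self_iff]
          constructor
          · rintro (h | ⟨h, h2⟩)
            · exact Or.inl h
            · exact Or.inr ⟨h.symm, h2⟩
          · rintro (h | ⟨h, h2⟩)
            · exact Or.inl h
            · exact Or.inr ⟨h.symm, h2⟩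
        rw [hchar, HDS i]
        have : r (e' i).castSucc (Fin.last n) ↔ ((e' i).castSucc : Fin (n+1)).val < c :=
          hdown _
        rw [this]
        simp
      · -- old, old
        have h1 : Prel w (P.succAbove i) (P.succAbove j) ↔ Prel w' i j := by
          rw [← hrm, Prel_removeNth]
        rw [h1, heold, heold]
        have h2 := hiff' i j
        rw [h2]
    have hlex : ∀ x y : Fin (n+1), e x < e y ↔ key w x < key w y := by
      intro x y
      rcases hsplit x with rfl | ⟨i, rfl⟩ <;> rcases hsplit y with rfl | ⟨j, rfl⟩
      · simp
      · rw [heP, heold]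
        constructor
        · intro h0
          exact absurd h0 (not_lt.2 (le_of_lt (Fin.castSucc_lt_last _)))
        · intro h0
          exact absurd h0 (not_lt.2 (le_of_lt (hkeymax j)))
      · rw [heold, heP]
        constructor
        · intro _; exact hkeymax i
        · intro _; exact Fin.castSucc_lt_last _
      · rw [heold, heold]
        have h1 : key w (P.succAbove i) < key w (P.succAbove j) ↔
            key w' i < key w' j := by
          rw [← hrm, ← key_removeNth]
        rw [h1, ← hlex' i j]
        exact Fin.castSucc_lt_castSucc_iff
    exact ⟨w, e, harea, hiff, hlex⟩




/-- structural facts about the key-maximal element of an area sequence -/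
theorem side_facts {n : ℕ} (w : Fin (n+1) → ℕ) (P : Fin (n+1))
    (hw : IsAreaSeq w) (hkm : ∀ x, x ≠ P → key w x < key w P) (hn : 0 < n)
    (hq : P.val - 1 < n) :
    1 ≤ P.val ∧
    w P ≤ P.removeNth w ⟨P.val - 1, hq⟩ + 1 ∧
    (∀ i, P.removeNth w i ≤ w P) ∧
    (∀ i, P.removeNth w i = w P → i.val < P.val) ∧
    (∀ i, Prel w (P.succAbove i) P ↔
      (P.removeNth w i + 2 ≤ w P ∨ (P.removeNth w i + 1 = w P ∧ i.val < P.val))) := by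
  have hval : ∀ i, i ≠ P → (w i < w P ∨ (w i = w P ∧ i < P)) := by
    intro i hi
    exact (key_lt_iff w i P).1 (hkm i hi)
  have hstep : ∀ (q : ℕ) (h : q + 1 < n + 1), w ⟨q+1, h⟩ ≤ w ⟨q, Nat.lt_of_succ_lt h⟩ + 1 := by
    intro q h
    exact hw.2 ⟨q, Nat.lt_of_succ_lt h⟩ h
  have hp : 1 ≤ P.val := by
    by_contra h0
    have hP0 : P = ⟨0, Nat.succ_pos n⟩ := Fin.ext (show P.val = 0 by omega)
    have h1n : (1 : ℕ) < n + 1 := by omega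
    have h1 : ((⟨1, h1n⟩ : Fin (n+1))) ≠ P := by
      rw [hP0]; intro hcon; simpa using congrArg Fin.val hcon
    have hC := hval _ h1
    have hB : w P = 0 := by rw [hP0]; exact hw.1 (Nat.succ_pos n)
    rcases hC with hC | ⟨hC, hlt⟩
    · omega
    · have hlt2 : (1 : ℕ) < P.val := hlt
      omega
  have hmax : ∀ i, P.removeNth w i ≤ w P := by
    intro i
    have h1 := hval (P.succAbove i) (Fin.succAbove_ne P i)
    show w (P.succAbove i) ≤ w P
    rcases h1 with h1 | ⟨h1, -⟩ <;> omega
  have hd : ∀ i, P.removeNth w i = w P → i.val < P.val := by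
    intro i hi
    have h1 := hval (P.succAbove i) (Fin.succAbove_ne P i)
    have hi2 : w (P.succAbove i) = w P := hi
    rcases h1 with h1 | ⟨-, h2⟩
    · omega
    · rw [succAbove_lt_self_iff] at h2
      exact h2
  refine ⟨hp, ?_, hmax, hd, ?_⟩
  · -- w P ≤ w' (P.val - 1) + 1
    show w P ≤ w (P.succAbove ⟨P.val - 1, hq⟩) + 1
    rw [succAbove_low P hq (by omega)]
    have hPeq : P = ⟨(P.val - 1) + 1, by omega⟩ := Fin.ext (by simp; omega)
    calc w P = w ⟨(P.val - 1) + 1, by omega⟩ := by rw [← hPeq]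
    _ ≤ w ⟨P.val - 1, Nat.lt_of_succ_lt (by omega)⟩ + 1 := hstep (P.val - 1) (by omega)
    _ = w ⟨P.val - 1, Nat.lt_succ_of_lt hq⟩ + 1 := rfl
  · intro i
    show Prel w (P.succAbove i) P ↔
      (w (P.succAbove i) + 2 ≤ w P ∨ (w (P.succAbove i) + 1 = w P ∧ i.val < P.val))
    unfold Prel
    rw [succAbove_lt_self_iff]
    constructor
    · rintro (h | ⟨h, h2⟩)
      · exact Or.inl h
      · exact Or.inr ⟨by omega, h2⟩
    · rintro (h | ⟨h, h2⟩)
      · exact Or.inl h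
      · exact Or.inr ⟨by omega, h2⟩




theorem sorted_uniq (n : ℕ) : ∀ (w1 w2 : Fin n → ℕ) (s1 s2 : Equiv.Perm (Fin n)),
    IsAreaSeq w1 → IsAreaSeq w2 →
    (∀ a b, a < b ↔ key w1 (s1 a) < key w1 (s1 b)) →
    (∀ a b, a < b ↔ key w2 (s2 a) < key w2 (s2 b)) →
    (∀ a b, Prel w1 (s1 a) (s1 b) ↔ Prel w2 (s2 a) (s2 b)) → w1 = w2 := by
  induction n with
  | zero => intro w1 w2 _ _ _ _ _ _ _; funext i; exact i.elim0
  | succ n IH =>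
    intro w1 w2 s1 s2 hw1 hw2 hl1 hl2 H
    classical
    obtain ⟨P1, hP1⟩ : ∃ P, P = s1 (Fin.last n) := ⟨_, rfl⟩
    obtain ⟨P2, hP2⟩ : ∃ P, P = s2 (Fin.last n) := ⟨_, rfl⟩
    have hkm1 : ∀ x, x ≠ P1 → key w1 x < key w1 P1 := by
      intro x hx
      have hax : s1 (s1.symm x) = x := s1.apply_symm_apply x
      have hne : s1.symm x ≠ Fin.last n := by
        intro hcon
        apply hx
        rw [← hax, hcon, ← hP1]
      have hlt : s1.symm x < Fin.last n := lt_of_le_of_ne (Fin.le_last _) hne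
      have h2 := (hl1 (s1.symm x) (Fin.last n)).1 hlt
      rw [hax, ← hP1] at h2
      exact h2
    have hkm2 : ∀ x, x ≠ P2 → key w2 x < key w2 P2 := by
      intro x hx
      have hax : s2 (s2.symm x) = x := s2.apply_symm_apply x
      have hne : s2.symm x ≠ Fin.last n := by
        intro hcon
        apply hx
        rw [← hax, hcon, ← hP2]
      have hlt : s2.symm x < Fin.last n := lt_of_le_of_ne (Fin.le_last _) hne
      have h2 := (hl2 (s2.symm x) (Fin.last n)).1 hlt
      rw [hax, ← hP2] at h2
      exact h2
    have hspec1 : ∀ a, P1.succAbove (resEquiv s1 a) = s1 (a.castSucc) := by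
      intro a; rw [hP1]; exact resEquiv_spec s1 a
    have hspec2 : ∀ a, P2.succAbove (resEquiv s2 a) = s2 (a.castSucc) := by
      intro a; rw [hP2]; exact resEquiv_spec s2 a
    have harea1' : IsAreaSeq (P1.removeNth w1) := area_remove w1 P1 hw1 hkm1
    have harea2' : IsAreaSeq (P2.removeNth w2) := area_remove w2 P2 hw2 hkm2
    have hlex1' : ∀ a b, a < b ↔
        key (P1.removeNth w1) (resEquiv s1 a) < key (P1.removeNth w1) (resEquiv s1 b) := by
      intro a b
      rw [key_removeNth, hspec1 a, hspec1 b, ← hl1]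
      exact Fin.castSucc_lt_castSucc_iff.symm
    have hlex2' : ∀ a b, a < b ↔
        key (P2.removeNth w2) (resEquiv s2 a) < key (P2.removeNth w2) (resEquiv s2 b) := by
      intro a b
      rw [key_removeNth, hspec2 a, hspec2 b, ← hl2]
      exact Fin.castSucc_lt_castSucc_iff.symm
    have H' : ∀ a b, Prel (P1.removeNth w1) (resEquiv s1 a) (resEquiv s1 b) ↔
        Prel (P2.removeNth w2) (resEquiv s2 a) (resEquiv s2 b) := by
      intro a b
      rw [Prel_removeNth, Prel_removeNth, hspec1 a, hspec1 b, hspec2 a, hspec2 b]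
      exact H _ _
    have hw' : P1.removeNth w1 = P2.removeNth w2 :=
      IH _ _ (resEquiv s1) (resEquiv s2) harea1' harea2' hlex1' hlex2' H'
    rcases Nat.eq_zero_or_pos n with rfl | hn
    · funext x
      have hx0 : x = ⟨0, Nat.succ_pos 0⟩ := Fin.ext (by have := x.isLt; omega)
      rw [hx0]
      rw [hw1.1 (Nat.succ_pos 0), hw2.1 (Nat.succ_pos 0)]
    have hq1 : P1.val - 1 < n := by have := P1.isLt; omega
    have hq2 : P2.val - 1 < n := by have := P2.isLt; omega
    obtain ⟨hp1, hb1, hc1, hd1, he1⟩ := side_facts w1 P1 hw1 hkm1 hn hq1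
    obtain ⟨hp2, hb2, hc2, hd2, he2⟩ := side_facts w2 P2 hw2 hkm2 hn hq2
    rw [← hw'] at hb2 hc2 hd2
    have he2' : ∀ i, Prel w2 (P2.succAbove i) P2 ↔
        (P1.removeNth w1 i + 2 ≤ w2 P2 ∨ (P1.removeNth w1 i + 1 = w2 P2 ∧ i.val < P2.val)) := by
      intro i
      rw [he2 i, hw']
    -- max of the common removed sequence
    have hne : (Finset.univ : Finset (Fin n)).Nonempty := ⟨⟨0, hn⟩, Finset.mem_univ _⟩
    obtain ⟨Kb, hKbdef⟩ : ∃ K, K = Finset.sup' Finset.univ hne (P1.removeNth w1) := ⟨_, rfl⟩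
    have hKb : ∀ i, P1.removeNth w1 i ≤ Kb := by
      intro i; rw [hKbdef]; exact Finset.le_sup' _ (Finset.mem_univ i)
    have hKb1 : Kb ≤ w1 P1 := by
      rw [hKbdef]; exact Finset.sup'_le _ _ (fun i _ => hc1 i)
    have hKb2 : Kb ≤ w2 P2 := by
      rw [hKbdef]; exact Finset.sup'_le _ _ (fun i _ => hc2 i)
    have hK1b : w1 P1 ≤ Kb + 1 := by
      have := hKb ⟨P1.val - 1, hq1⟩; omega
    have hK2b : w2 P2 ≤ Kb + 1 := by
      have := hKb ⟨P2.val - 1, hq2⟩; omega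
    -- the two down-sets coincide
    have hDS : (Finset.univ.filter (fun i : Fin n => Prel w1 (P1.succAbove i) P1)) =
        (Finset.univ.filter (fun i : Fin n => Prel w2 (P2.succAbove i) P2)) := by
      apply lowset_eq (key (P1.removeNth w1)) (key_injective _)
      · intro i hi j hj
        have h1 := (Finset.mem_filter.1 hi).2
        refine Finset.mem_filter.2 ⟨Finset.mem_univ _, ?_⟩
        rw [key_removeNth] at hj
        exact Prel_mono w1 h1 (le_of_lt hj) (le_refl _)
      · intro i hi j hj
        have h1 := (Finset.mem_filter.1 hi).2
        refine Finset.mem_filter.2 ⟨Finset.mem_univ _, ?_⟩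
        rw [hw', key_removeNth] at hj
        exact Prel_mono w2 h1 (le_of_lt hj) (le_refl _)
      · -- equal cardinalities
        have c1 := card_filter_equiv (resEquiv s1) (fun i : Fin n => Prel w1 (P1.succAbove i) P1)
        have c2 := card_filter_equiv (resEquiv s2) (fun i : Fin n => Prel w2 (P2.succAbove i) P2)
        have e1 : Finset.univ.filter (fun b : Fin n => Prel w1 (P1.succAbove (resEquiv s1 b)) P1)
            = Finset.univ.filter (fun b : Fin n => Prel w2 (P2.succAbove (resEquiv s2 b)) P2) := by
          apply Finset.filter_congr
          intro b _
          rw [hspec1 b, hspec2 b, hP1, hP2]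
          exact H _ _
        rw [← c1, ← c2, e1]
    have hmem : ∀ i : Fin n,
        (P1.removeNth w1 i + 2 ≤ w1 P1 ∨ (P1.removeNth w1 i + 1 = w1 P1 ∧ i.val < P1.val)) ↔
        (P1.removeNth w1 i + 2 ≤ w2 P2 ∨ (P1.removeNth w1 i + 1 = w2 P2 ∧ i.val < P2.val)) := by
      intro i
      rw [← he1 i, ← he2' i]
      have := Finset.ext_iff.1 hDS i
      simp only [Finset.mem_filter, Finset.mem_univ, true_and] at this
      exact this
    -- equal values of the removed elements
    have hKeq : w1 P1 = w2 P2 := by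
      by_contra hKne
      rcases Nat.lt_or_ge (w1 P1) (w2 P2) with hlt | hge
      · -- w1 P1 = Kb, w2 P2 = Kb + 1
        have h1 : w1 P1 = Kb := by omega
        have h2 : w2 P2 = Kb + 1 := by omega
        have hi := hKb ⟨P2.val - 1, hq2⟩
        have hival : P1.removeNth w1 ⟨P2.val - 1, hq2⟩ = Kb := by omega
        have hm := (hmem ⟨P2.val - 1, hq2⟩).2 (Or.inr ⟨by omega, by show P2.val - 1 < P2.val; omega⟩)
        rcases hm with hm | ⟨hm, -⟩ <;> omega
      · have h1 : w2 P2 = Kb := by omega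
        have h2 : w1 P1 = Kb + 1 := by omega
        have hi := hKb ⟨P1.val - 1, hq1⟩
        have hival : P1.removeNth w1 ⟨P1.val - 1, hq1⟩ = Kb := by omega
        have hm := (hmem ⟨P1.val - 1, hq1⟩).1 (Or.inr ⟨by omega, by show P1.val - 1 < P1.val; omega⟩)
        rcases hm with hm | ⟨hm, -⟩ <;> omega
    -- equal positions
    have hPeq : P1.val = P2.val := by
      by_contra hPne
      rcases Nat.lt_or_ge P1.val P2.val with hlt | hge
      · set i : Fin n := ⟨P2.val - 1, hq2⟩ with hidef
        have hge1 : w2 P2 ≤ P1.removeNth w1 i + 1 := hb2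
        rcases Nat.lt_or_ge (P1.removeNth w1 i) (w2 P2) with hcs | hcs
        · -- w' i + 1 = w2 P2 : in DS2, so in DS1, contradiction with position
          have hm := (hmem i).2 (Or.inr ⟨by omega, by show P2.val - 1 < P2.val; omega⟩)
          have hcc := hc1 i
          rcases hm with hm | ⟨-, hm2⟩
          · omega
          · have : P1.val ≤ P2.val - 1 := by omega
            have hm3 : (i : Fin n).val < P1.val := hm2
            rw [hidef] at hm3
            simp at hm3
            omega
        · -- w' i = w2 P2 = w1 P1 : hd1 gives position < P1.val, contradiction
          have hcc := hc1 i
          have hival : P1.removeNth w1 i = w1 P1 := by omega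
          have := hd1 i hival
          rw [hidef] at this
          simp at this
          omega
      · set i : Fin n := ⟨P1.val - 1, hq1⟩ with hidef
        have hge1 : w1 P1 ≤ P1.removeNth w1 i + 1 := hb1
        rcases Nat.lt_or_ge (P1.removeNth w1 i) (w1 P1) with hcs | hcs
        · have hm := (hmem i).1 (Or.inr ⟨by omega, by show P1.val - 1 < P1.val; omega⟩)
          have hcc := hc2 i
          rcases hm with hm | ⟨-, hm2⟩
          · omega
          · have hm3 : (i : Fin n).val < P2.val := hm2
            rw [hidef] at hm3
            simp at hm3
            omega
        · have hcc := hc2 i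
          have hival : P1.removeNth w1 i = w2 P2 := by omega
          have := hd2 i (by rw [← hw'] at *; omega)
          rw [hidef] at this
          simp at this
          omega
    have hPP : P1 = P2 := Fin.ext hPeq
    calc w1 = P1.insertNth (w1 P1) (P1.removeNth w1) :=
          (Fin.insertNth_self_removeNth P1 w1).symm
      _ = P2.insertNth (w2 P2) (P2.removeNth w2) := by rw [hKeq, hw', hPP]
      _ = w2 := Fin.insertNth_self_removeNth P2 w2




theorem exists_sort (n : ℕ) (w : Fin n → ℕ) :
    ∃ s : Equiv.Perm (Fin n), ∀ a b, a < b ↔ key w (s a) < key w (s b) := by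
  refine ⟨Tuple.sort (key w), ?_⟩
  have hmono : Monotone (key w ∘ Tuple.sort (key w)) := Tuple.monotone_sort (key w)
  have hinj : Function.Injective (key w ∘ Tuple.sort (key w)) :=
    (key_injective w).comp (Equiv.injective _)
  have hsm : StrictMono (key w ∘ Tuple.sort (key w)) := hmono.strictMono_of_injective hinj
  intro a b
  constructor
  · intro h; exact hsm h
  · intro h
    by_contra h2
    push_neg at h2
    have := hmono h2
    simp only [Function.comp_apply] at this
    omega


end UIOaux

/-- For every unit interval order `U` on `{1,…,n}` there is
exactly one sequence `w` which is the area sequence of a Dyck path and such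
that `P(w)` is isomorphic to `U`. -/
theorem unique_dyck_part_listing {n : ℕ} (r : Fin n → Fin n → Prop)
    (h : IsUIO r) :
    ∃! w : Fin n → ℕ, IsAreaSeq w ∧
      ∃ e : Fin n ≃ Fin n, ∀ i j : Fin n, Prel w i j ↔ r (e i) (e j) := by
  classical
  obtain ⟨w, e, harea, hiff, -⟩ := UIOaux.exists_good n r h
  refine ⟨w, ⟨harea, e, hiff⟩, ?_⟩
  rintro w2 ⟨harea2, e2, hiff2⟩
  obtain ⟨σ, hσ⟩ := UIOaux.exists_sort n w
  obtain ⟨σ2, hσ2⟩ := UIOaux.exists_sort n w2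
  -- sorted relations
  set R : Fin n → Fin n → Prop := fun a b => Prel w (σ a) (σ b) with hR
  set R2 : Fin n → Fin n → Prop := fun a b => Prel w2 (σ2 a) (σ2 b) with hR2
  have hkey_le : ∀ a b : Fin n, a ≤ b → UIOaux.key w (σ a) ≤ UIOaux.key w (σ b) := by
    intro a b hab
    rcases eq_or_lt_of_le hab with rfl | hlt
    · exact le_refl _
    · exact le_of_lt ((hσ a b).1 hlt)
  have hkey2_le : ∀ a b : Fin n, a ≤ b → UIOaux.key w2 (σ2 a) ≤ UIOaux.key w2 (σ2 b) := by
    intro a b hab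
    rcases eq_or_lt_of_le hab with rfl | hlt
    · exact le_refl _
    · exact le_of_lt ((hσ2 a b).1 hlt)
  have hRmono : ∀ a b a' b' : Fin n, R a b → a' ≤ a → b ≤ b' → R a' b' := by
    intro a b a' b' hr ha hb
    exact UIOaux.Prel_mono w hr (hkey_le a' a ha) (hkey_le b b' hb)
  have hR2mono : ∀ a b a' b' : Fin n, R2 a b → a' ≤ a → b ≤ b' → R2 a' b' := by
    intro a b a' b' hr ha hb
    exact UIOaux.Prel_mono w2 hr (hkey2_le a' a ha) (hkey2_le b b' hb)
  -- the permutation linking the two sorted relations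
  set g : Equiv.Perm (Fin n) := (σ2.trans e2).trans ((σ.trans e).symm) with hg
  have hgspec : ∀ a, e (σ (g a)) = e2 (σ2 a) := by
    intro a
    show e (σ (((σ.trans e).symm) ((σ2.trans e2) a))) = e2 (σ2 a)
    have : ∀ x, e (σ (((σ.trans e).symm) x)) = x := fun x => (σ.trans e).apply_symm_apply x
    rw [this]
    rfl
  have hRlink : ∀ a b, R2 a b ↔ R (g a) (g b) := by
    intro a b
    rw [hR, hR2]
    simp only
    rw [hiff2, hiff, hgspec a, hgspec b]
  -- down-counts
  set cF : Fin n → ℕ := fun b => (Finset.univ.filter (fun a => R a b)).card with hcF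
  set c2F : Fin n → ℕ := fun b => (Finset.univ.filter (fun a => R2 a b)).card with hc2F
  have hdesc : ∀ (S : Fin n → Fin n → Prop) (hS : ∀ a b a' b', S a b → a' ≤ a → b ≤ b' → S a' b')
      (b : Fin n) (a : Fin n),
      S a b ↔ a.val < (Finset.univ.filter (fun x => S x b)).card := by
    intro S hS b a
    have hcle : (Finset.univ.filter (fun x => S x b)).card ≤ n := by
      have := Finset.card_filter_le Finset.univ (fun x => S x b)
      simpa using this
    have hEq : Finset.univ.filter (fun x => S x b) =
        Finset.univ.filter (fun x : Fin n => x.val <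
          (Finset.univ.filter (fun x => S x b)).card) := by
      apply UIOaux.lowset_eq (fun x : Fin n => x.val) (fun x y hxy => Fin.ext hxy)
      · intro x hx y hy
        have h1 := (Finset.mem_filter.1 hx).2
        exact Finset.mem_filter.2 ⟨Finset.mem_univ _, hS x b y b h1 (le_of_lt hy) (le_refl _)⟩
      · intro x hx y hy
        have h1 := (Finset.mem_filter.1 hx).2
        exact Finset.mem_filter.2 ⟨Finset.mem_univ _, by omega⟩
      · rw [UIOaux.card_val_lt hcle]
    have := Finset.ext_iff.1 hEq a
    simp only [Finset.mem_filter, Finset.mem_univ, true_and] at this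
    exact this
  have hRc : ∀ a b, R a b ↔ a.val < cF b := fun a b => hdesc R hRmono b a
  have hR2c : ∀ a b, R2 a b ↔ a.val < c2F b := fun a b => hdesc R2 hR2mono b a
  have hcomp : ∀ b, c2F b = cF (g b) := by
    intro b
    rw [hcF, hc2F]
    simp only
    have h1 : Finset.univ.filter (fun a => R2 a b) =
        Finset.univ.filter (fun a => R (g a) (g b)) := by
      apply Finset.filter_congr
      intro a _
      exact hRlink a b
    rw [h1]
    exact UIOaux.card_filter_equiv g (fun x => R x (g b))
  have hcFmono : Monotone cF := by
    intro b b' hbb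
    apply Finset.card_le_card
    intro a ha
    have h1 := (Finset.mem_filter.1 ha).2
    exact Finset.mem_filter.2 ⟨Finset.mem_univ _, hRmono a b a b' h1 (le_refl _) hbb⟩
  have hc2Fmono : Monotone c2F := by
    intro b b' hbb
    apply Finset.card_le_card
    intro a ha
    have h1 := (Finset.mem_filter.1 ha).2
    exact Finset.mem_filter.2 ⟨Finset.mem_univ _, hR2mono a b a b' h1 (le_refl _) hbb⟩
  have hcfg : cF ∘ g = cF := by
    have hm1 : Monotone (cF ∘ (g : Fin n → Fin n)) := by
      have : (cF ∘ (g : Fin n → Fin n)) = c2F := by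
        funext b; exact (hcomp b).symm
      rw [this]; exact hc2Fmono
    have hm2 : Monotone (cF ∘ ((Equiv.refl (Fin n)) : Fin n → Fin n)) := by
      simpa using hcFmono
    have := Tuple.unique_monotone (f := cF) (σ := g) (τ := Equiv.refl (Fin n)) hm1 hm2
    simpa using this
  have Hfin : ∀ a b, Prel w2 (σ2 a) (σ2 b) ↔ Prel w (σ a) (σ b) := by
    intro a b
    have h1 : R2 a b ↔ R a b := by
      rw [hR2c, hRc, hcomp b]
      have : cF (g b) = cF b := congrFun hcfg b
      rw [this]
    exact h1
  exact UIOaux.sorted_uniq n w2 w σ2 σ harea2 harea hσ2 hσ Hfin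
end
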